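/- arXiv:2209.00443 — 7 statements merged into one kernel-verified Lean document; each statement's English description precedes it below -/
import Mathlib

section
/- Let 𝔤 be a finite-dimensional real Lie algebra with an invariant inner product ⟨·,·⟩ (i.e. ⟨⁅z,x⁆,y⟩ + ⟨x,⁅z,y⁆⟩ = 0 for all x,y,z ∈ 𝔤). Let 𝔨 ⊆ 𝔤 be a Lie subalgebra and 𝔥 ⊆ 𝔨 an ideal of 𝔨; let 𝔪₀ be the orthogonal complement of 𝔥 in 𝔨 and 𝔪′ the orthogonal complement of 𝔨 in 𝔤. Assume 𝔪′ is a nonzero irreducible 𝔨-module under the adjoint action (the only subspaces W ⊆ 𝔪′ with ⁅𝔨, W⁆ ⊆ W are 0 and 𝔪′), and assume 𝔪₀ is not an ideal of 𝔤. Then any vector v ∈ 𝔪′ satisfying ⁅v, w⁆ = 0 for all w ∈ 𝔪₀ must be 0. -/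
/-!
Every `x ∈ 𝔨` normalizes `𝔪₀` and `𝔪′` (orthogonal complements of `ad 𝔨`-stable subspaces are
`ad 𝔨`-stable by invariance of `B`), so by the Jacobi identity the subspace of `𝔪′` centralizing
`𝔪₀` is a `𝔨`-submodule of `𝔪′`. By irreducibility it is `0`, which is the claim, or all of
`𝔪′`. In the latter case, since `𝔤 = 𝔨 ⊕ 𝔪′`, every element of `𝔤` is a sum of an element
normalizing `𝔪₀` and one centralizing it, so `𝔪₀` would be an ideal.
-/

section Centralizer

variable (R : Type*) {L : Type*} [CommRing R] [LieRing L] [LieAlgebra R L]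

def lieCentralizer (S : Set L) : Submodule R L where
  carrier := {u | ∀ w ∈ S, ⁅u, w⁆ = 0}
  add_mem' hu hv w hw := by rw [add_lie, hu w hw, hv w hw, add_zero]
  zero_mem' w _ := zero_lie w
  smul_mem' c u hu w hw := by rw [smul_lie, hu w hw, smul_zero]

variable {R}

theorem lie_mem_lieCentralizer {S : Set L} {x u : L} (hx : ∀ w ∈ S, ⁅x, w⁆ ∈ S)
    (hu : u ∈ lieCentralizer R S) : ⁅x, u⁆ ∈ lieCentralizer R S := fun w hw => by
  rw [lie_lie, hu w hw, lie_zero, zero_sub, hu _ (hx w hw), neg_zero]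

theorem lie_mem_of_sup_eq_top {K M S : Submodule R L} (hKM : K ⊔ M = ⊤)
    (hK : ∀ k ∈ K, ∀ v ∈ S, ⁅k, v⁆ ∈ S) (hM : M ≤ lieCentralizer R S) :
    ∀ x : L, ∀ v ∈ S, ⁅x, v⁆ ∈ S := by
  intro x v hv
  obtain ⟨k, hk, m, hm, rfl⟩ := Submodule.mem_sup.1 (hKM ▸ Submodule.mem_top : x ∈ K ⊔ M)
  rw [add_lie, hM hm v hv, add_zero]
  exact hK k hk v hv

end Centralizer

section InvariantForm

variable {L : Type*} [LieRing L] [LieAlgebra ℝ L] {B : L →ₗ[ℝ] L →ₗ[ℝ] ℝ}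

theorem lie_orthogonal_of_orthogonal (hBinv : ∀ x y z : L, B ⁅z, x⁆ y + B x ⁅z, y⁆ = 0)
    {S : Set L} {x v : L} (hx : ∀ w ∈ S, ⁅x, w⁆ ∈ S) (hv : ∀ w ∈ S, B v w = 0) :
    ∀ w ∈ S, B ⁅x, v⁆ w = 0 := fun w hw => by
  linarith [hBinv v w x, hv _ (hx w hw)]

theorem sup_orthogonal_eq_top [FiniteDimensional ℝ L] (hBsymm : ∀ x y : L, B x y = B y x)
    (hBpos : ∀ x : L, x ≠ 0 → 0 < B x x) {K M : Submodule ℝ L}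
    (hM : ∀ v : L, v ∈ M ↔ ∀ w ∈ K, B v w = 0) : K ⊔ M = ⊤ := by
  have hrefl : LinearMap.BilinForm.IsRefl B := fun x y h => by rwa [hBsymm]
  have hMorth : M = LinearMap.BilinForm.orthogonal B K := by
    ext v
    rw [hM, LinearMap.BilinForm.mem_orthogonal_iff]
    exact forall₂_congr fun w _ => by rw [hBsymm]
  have hdisj : Disjoint K M := by
    refine Submodule.disjoint_def.2 fun x hxK hxM => by_contra fun hx => ?_
    exact (hBpos x hx).ne' ((hM x).1 hxM x hxK)
  rw [hMorth] at hdisj ⊢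
  exact ((LinearMap.BilinForm.isCompl_orthogonal_iff_disjoint hrefl).2 hdisj).sup_eq_top

end InvariantForm

theorem eq_zero_of_centralizes_m0_general
    {L : Type*} [LieRing L] [LieAlgebra ℝ L] [FiniteDimensional ℝ L]
    (B : L →ₗ[ℝ] L →ₗ[ℝ] ℝ)
    (hBsymm : ∀ x y : L, B x y = B y x)
    (hBpos : ∀ x : L, x ≠ 0 → 0 < B x x)
    (hBinv : ∀ x y z : L, B ⁅z, x⁆ y + B x ⁅z, y⁆ = 0)
    (𝔨 : Submodule ℝ L) (h𝔨 : ∀ x ∈ 𝔨, ∀ y ∈ 𝔨, ⁅x, y⁆ ∈ 𝔨)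
    (𝔥 : Submodule ℝ L)
    (h𝔥ideal : ∀ x ∈ 𝔨, ∀ y ∈ 𝔥, ⁅x, y⁆ ∈ 𝔥)
    (𝔪₀ : Submodule ℝ L)
    (h𝔪₀ : ∀ v : L, v ∈ 𝔪₀ ↔ v ∈ 𝔨 ∧ ∀ w ∈ 𝔥, B v w = 0)
    (𝔪' : Submodule ℝ L)
    (h𝔪' : ∀ v : L, v ∈ 𝔪' ↔ ∀ w ∈ 𝔨, B v w = 0)
    (h𝔪'irr : ∀ W : Submodule ℝ L, W ≤ 𝔪' →
      (∀ x ∈ 𝔨, ∀ v ∈ W, ⁅x, v⁆ ∈ W) → W = ⊥ ∨ W = 𝔪')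
    (h𝔪₀notideal : ¬ (∀ x : L, ∀ v ∈ 𝔪₀, ⁅x, v⁆ ∈ 𝔪₀)) :
    ∀ v ∈ 𝔪', (∀ w ∈ 𝔪₀, ⁅v, w⁆ = 0) → v = 0 := by
  intro v hv hvm₀
  have h𝔨m₀ : ∀ x ∈ 𝔨, ∀ w ∈ 𝔪₀, ⁅x, w⁆ ∈ 𝔪₀ := fun x hx w hw => by
    obtain ⟨hw𝔨, hw𝔥⟩ := (h𝔪₀ w).1 hw
    exact (h𝔪₀ _).2 ⟨h𝔨 x hx w hw𝔨, lie_orthogonal_of_orthogonal hBinv (h𝔥ideal x hx) hw𝔥⟩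
  have h𝔨m' : ∀ x ∈ 𝔨, ∀ u ∈ 𝔪', ⁅x, u⁆ ∈ 𝔪' := fun x hx u hu =>
    (h𝔪' _).2 (lie_orthogonal_of_orthogonal hBinv (h𝔨 x hx) ((h𝔪' u).1 hu))
  rcases h𝔪'irr (𝔪' ⊓ lieCentralizer ℝ 𝔪₀) inf_le_left
      (fun x hx u hu => ⟨h𝔨m' x hx u hu.1, lie_mem_lieCentralizer (h𝔨m₀ x hx) hu.2⟩) with
    hbot | htop
  · exact (Submodule.mem_bot ℝ).1 (hbot ▸ ⟨hv, hvm₀⟩)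
  · exact absurd (lie_mem_of_sup_eq_top (sup_orthogonal_eq_top hBsymm hBpos h𝔪')
      h𝔨m₀ (htop ▸ inf_le_right)) h𝔪₀notideal

/-- **Lemma 2, first part.**
With `𝔤, B, 𝔨, 𝔥, 𝔪₀, 𝔪′` as in the orthogonal reductive decomposition, if `𝔪′` is a
nonzero irreducible `𝔨`-module under the adjoint action and `𝔪₀` is not an ideal of `𝔤`,
then any `v ∈ 𝔪′` with `⁅v, 𝔪₀⁆ = 0` must vanish. -/
theorem eq_zero_of_centralizes_m0
    {L : Type*} [LieRing L] [LieAlgebra ℝ L] [FiniteDimensional ℝ L]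
    (B : L →ₗ[ℝ] L →ₗ[ℝ] ℝ)
    (hBsymm : ∀ x y : L, B x y = B y x)
    (hBpos : ∀ x : L, x ≠ 0 → 0 < B x x)
    (hBinv : ∀ x y z : L, B ⁅z, x⁆ y + B x ⁅z, y⁆ = 0)
    (𝔨 : Submodule ℝ L) (h𝔨 : ∀ x ∈ 𝔨, ∀ y ∈ 𝔨, ⁅x, y⁆ ∈ 𝔨)
    (𝔥 : Submodule ℝ L) (h𝔥𝔨 : 𝔥 ≤ 𝔨)
    (h𝔥ideal : ∀ x ∈ 𝔨, ∀ y ∈ 𝔥, ⁅x, y⁆ ∈ 𝔥)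
    (𝔪₀ : Submodule ℝ L)
    (h𝔪₀ : ∀ v : L, v ∈ 𝔪₀ ↔ v ∈ 𝔨 ∧ ∀ w ∈ 𝔥, B v w = 0)
    (𝔪' : Submodule ℝ L)
    (h𝔪' : ∀ v : L, v ∈ 𝔪' ↔ ∀ w ∈ 𝔨, B v w = 0)
    (h𝔪'ne : 𝔪' ≠ ⊥)
    (h𝔪'irr : ∀ W : Submodule ℝ L, W ≤ 𝔪' →
      (∀ x ∈ 𝔨, ∀ v ∈ W, ⁅x, v⁆ ∈ W) → W = ⊥ ∨ W = 𝔪')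
    (h𝔪₀notideal : ¬ (∀ x : L, ∀ v ∈ 𝔪₀, ⁅x, v⁆ ∈ 𝔪₀)) :
    ∀ v ∈ 𝔪', (∀ w ∈ 𝔪₀, ⁅v, w⁆ = 0) → v = 0 :=
  eq_zero_of_centralizes_m0_general B hBsymm hBpos hBinv 𝔨 h𝔨 𝔥 h𝔥ideal 𝔪₀ h𝔪₀ 𝔪' h𝔪' h𝔪'irr
    h𝔪₀notideal
end

section
/- Let V be a nonzero finite-dimensional real inner product space and let u ∈ V with u ≠ 0. Then the set {Λ(u) : Λ a self-adjoint positive-definite linear endomorphism of V} contains an open neighborhood of u in V. -/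
/-!
Write `w = u + v`. With `a = u / ‖u‖²`, so that `⟪a, u⟫ = 1`, the rank-two operator
`S = v ⊗ a + a ⊗ v - ⟪u, v⟫ a ⊗ a` is symmetric, sends `u` to `v`, and has norm at most
`3 ‖v‖ / ‖u‖`. For `‖v‖ < ‖u‖ / 3` the operator `1 + S` is therefore a positive-definite
symmetric operator sending `u` to `w`.
-/

open scoped RealInnerProductSpace

open ContinuousLinearMap InnerProductSpace

section

variable {V : Type*} [NormedAddCommGroup V] [InnerProductSpace ℝ V]

theorem inner_add_apply_self_pos {S : V →L[ℝ] V} (hS : ‖S‖ < 1) {x : V} (hx : x ≠ 0) :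
    0 < ⟪x + S x, x⟫ := by
  have hx' : 0 < ‖x‖ ^ 2 := by positivity
  have hSx : -(‖S‖ * ‖x‖ ^ 2) ≤ ⟪S x, x⟫ :=
    calc -(‖S‖ * ‖x‖ ^ 2) = -(‖S‖ * ‖x‖ * ‖x‖) := by ring
      _ ≤ -(‖S x‖ * ‖x‖) := by gcongr; exact S.le_opNorm x
      _ ≤ ⟪S x, x⟫ := neg_le_of_abs_le (abs_real_inner_le_norm _ _)
  rw [inner_add_left, real_inner_self_eq_norm_sq]
  nlinarith

theorem isSymmetric_rankOne_add_rankOne_sub_smul_rankOne (a v : V) (c : ℝ) :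
    (rankOne ℝ v a + rankOne ℝ a v - c • rankOne ℝ a a : V →L[ℝ] V).toLinearMap.IsSymmetric := by
  intro x y
  simp only [toLinearMap_sub, toLinearMap_add, toLinearMap_smul, LinearMap.sub_apply,
    LinearMap.add_apply, LinearMap.smul_apply, coe_coe, rankOne_apply, inner_sub_left,
    inner_add_left, real_inner_smul_left, inner_sub_right, inner_add_right,
    real_inner_smul_right, real_inner_comm x]
  ring

theorem exists_isSymmetric_apply_eq_norm_le {u : V} (hu : u ≠ 0) (v : V) :
    ∃ S : V →L[ℝ] V, S.toLinearMap.IsSymmetric ∧ S u = v ∧ ‖S‖ ≤ 3 * ‖v‖ / ‖u‖ := by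
  have hu' : 0 < ‖u‖ := norm_pos_iff.mpr hu
  set a : V := (‖u‖ ^ 2)⁻¹ • u
  have hau : ⟪a, u⟫ = 1 := by
    rw [real_inner_smul_left, real_inner_self_eq_norm_sq]; field_simp
  have ha : ‖a‖ = ‖u‖⁻¹ := by
    rw [norm_smul, norm_inv, norm_pow, norm_norm]; field_simp
  refine ⟨rankOne ℝ v a + rankOne ℝ a v - ⟪u, v⟫ • rankOne ℝ a a,
    isSymmetric_rankOne_add_rankOne_sub_smul_rankOne a v _, ?_, ?_⟩
  · simp [hau, real_inner_comm u v]
  · calc _ ≤ ‖v‖ * ‖a‖ + ‖a‖ * ‖v‖ + |⟪u, v⟫| * (‖a‖ * ‖a‖) := by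
          refine (norm_sub_le _ _).trans (add_le_add ((norm_add_le _ _).trans_eq ?_) ?_) <;>
            simp [norm_smul]
      _ ≤ ‖v‖ * ‖a‖ + ‖a‖ * ‖v‖ + ‖u‖ * ‖v‖ * (‖a‖ * ‖a‖) := by
          gcongr; exact abs_real_inner_le_norm u v
      _ = 3 * ‖v‖ / ‖u‖ := by rw [ha]; field_simp; ring

end

theorem image_of_positive_definite_operators_mem_nhds_general
    {V : Type*} [NormedAddCommGroup V] [InnerProductSpace ℝ V]
    (u : V) (hu : u ≠ 0) :
    {w : V | ∃ Λ : V →ₗ[ℝ] V,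
        (∀ x y : V, ⟪Λ x, y⟫ = ⟪x, Λ y⟫) ∧
        (∀ x : V, x ≠ 0 → 0 < ⟪Λ x, x⟫) ∧
        Λ u = w} ∈ nhds u := by
  have hu' : 0 < ‖u‖ := norm_pos_iff.mpr hu
  refine Filter.mem_of_superset (Metric.ball_mem_nhds u (by positivity : 0 < ‖u‖ / 3)) ?_
  intro w hw
  obtain ⟨S, hS_symm, hSu, hS_norm⟩ := exists_isSymmetric_apply_eq_norm_le hu (w - u)
  have hS : ‖S‖ < 1 := by
    rw [Metric.mem_ball, dist_eq_norm] at hw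
    calc ‖S‖ ≤ 3 * ‖w - u‖ / ‖u‖ := hS_norm
      _ < 1 := by rw [div_lt_one hu']; linarith
  refine ⟨LinearMap.id + S.toLinearMap, LinearMap.IsSymmetric.id.add hS_symm,
    fun x hx => inner_add_apply_self_pos hS hx, ?_⟩
  simp [hSu]

/-- For a nonzero vector `u` in a nonzero finite-dimensional real inner product space `V`,
the set of images `Λ u` of `u` under all self-adjoint positive-definite linear endomorphisms
`Λ` of `V` contains an open neighborhood of `u`. -/
theorem image_of_positive_definite_operators_mem_nhds
    {V : Type*} [NormedAddCommGroup V] [InnerProductSpace ℝ V]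
    [FiniteDimensional ℝ V] [Nontrivial V]
    (u : V) (hu : u ≠ 0) :
    {w : V | ∃ Λ : V →ₗ[ℝ] V,
        (∀ x y : V, ⟪Λ x, y⟫ = ⟪x, Λ y⟫) ∧
        (∀ x : V, x ≠ 0 → 0 < ⟪Λ x, x⟫) ∧
        Λ u = w} ∈ nhds u :=
  image_of_positive_definite_operators_mem_nhds_general u hu
end

section
/- Let 𝔤 be a finite-dimensional real Lie algebra with an invariant inner product ⟨·,·⟩ (i.e. ⟨⁅z,x⁆,y⟩ + ⟨x,⁅z,y⁆⟩ = 0 for all x,y,z ∈ 𝔤), 𝔥 ⊆ 𝔤 a Lie subalgebra, 𝔪 = 𝔥^⊥, pr_𝔪 the orthogonal projection onto 𝔪, and 𝔪₀ = {v ∈ 𝔪 : ⁅w,v⁆ = 0 for all w ∈ 𝔥}; assume 𝔪₀ ≠ 0. Then for X ∈ 𝔪 \ {0}, X is a Randers equigeodesic vector if and only if X is a Riemannian equigeodesic vector and ⁅X, v⁆ ∈ 𝔥 for every v ∈ 𝔪₀. -/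
/-- An invariant inner product on the subspace `𝔪` of the Lie algebra `L`, encoded as a
bilinear form on `L` which is symmetric and positive definite on `𝔪`, and `ad 𝔥`-invariant
on `𝔪`. -/
def IsInvariantInnerOn {L : Type*} [LieRing L] [LieAlgebra ℝ L]
    (𝔥 𝔪 : Submodule ℝ L) (α : L →ₗ[ℝ] L →ₗ[ℝ] ℝ) : Prop :=
  (∀ u ∈ 𝔪, ∀ v ∈ 𝔪, α u v = α v u) ∧
  (∀ u ∈ 𝔪, u ≠ 0 → 0 < α u u) ∧
  (∀ w ∈ 𝔥, ∀ u ∈ 𝔪, ∀ v ∈ 𝔪, α ⁅w, u⁆ v + α u ⁅w, v⁆ = 0)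

/-- `X` is a Riemannian equigeodesic vector: the Kowalski–Vanhecke geodesic criterion
`α(pr_𝔪 ⁅X,Z⁆, X) = 0` holds for every invariant inner product `α` on `𝔪` and all `Z ∈ 𝔪`. -/
def IsRiemannianEquigeodesicVector {L : Type*} [LieRing L] [LieAlgebra ℝ L]
    (𝔥 𝔪 : Submodule ℝ L) (pr : L →ₗ[ℝ] L) (X : L) : Prop :=
  ∀ α : L →ₗ[ℝ] L →ₗ[ℝ] ℝ, IsInvariantInnerOn 𝔥 𝔪 α →
    ∀ Z ∈ 𝔪, α (pr ⁅X, Z⁆) X = 0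

/-- `X` is a Randers equigeodesic vector: the geodesic-vector criterion
`α(pr_𝔪 ⁅X,Z⁆, X) + √(α(X,X))·α(pr_𝔪 ⁅X,Z⁆, u) = 0` for every invariant Randers metric
`F(y) = √(α(y,y)) + α(y,u)`, i.e. for every invariant inner product `α` on `𝔪`, every
`u ∈ 𝔪₀` with `α(u,u) < 1`, and every `Z ∈ 𝔪`. -/
def IsRandersEquigeodesicVector {L : Type*} [LieRing L] [LieAlgebra ℝ L]
    (𝔥 𝔪 𝔪₀ : Submodule ℝ L) (pr : L →ₗ[ℝ] L) (X : L) : Prop :=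
  ∀ α : L →ₗ[ℝ] L →ₗ[ℝ] ℝ, IsInvariantInnerOn 𝔥 𝔪 α →
    ∀ u ∈ 𝔪₀, α u u < 1 →
      ∀ Z ∈ 𝔪, α (pr ⁅X, Z⁆) X + Real.sqrt (α X X) * α (pr ⁅X, Z⁆) u = 0

/-!
Taking `u = 0` shows that a Randers equigeodesic vector is Riemannian equigeodesic, and for
`α = B` a rescaled `u = t • v` shows that `pr_𝔪 ⁅X, 𝔪⁆ ⟂_B 𝔪₀`. By `ad`-invariance of `B` the
latter says exactly that `⁅X, 𝔪₀⁆ ⊆ 𝔥`. Conversely, for an arbitrary invariant `α` the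
functional `α(·, u)` on `𝔪` is represented by `B(u', ·)` for some `u' ∈ 𝔪`, invariance of `α`
puts `u'` in `𝔪₀`, and then `α(pr_𝔪 ⁅X, Z⁆, u) = -B(Z, ⁅X, u'⁆) = 0` since `⁅X, u'⁆ ∈ 𝔥`.
-/

namespace LinearMap.BilinForm

theorem exists_mem_forall_apply_eq_of_anisotropicOn {K V : Type*} [Field K] [AddCommGroup V]
    [Module K V] [FiniteDimensional K V] (B : LinearMap.BilinForm K V) {W : Submodule K V}
    (hB : ∀ v ∈ W, B v v = 0 → v = 0) (f : V →ₗ[K] K) :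
    ∃ w ∈ W, ∀ m ∈ W, B w m = f m := by
  have hW : (B.restrict W).Nondegenerate := .ofSeparatingLeft fun v hv =>
    Subtype.ext (hB v v.2 (hv v))
  obtain ⟨w, hw⟩ := (toDual _ hW).surjective (f.comp W.subtype)
  exact ⟨w, w.2, fun m hm => DFunLike.congr_fun hw ⟨m, hm⟩⟩

end LinearMap.BilinForm

section

variable {L : Type*} [LieRing L] [LieAlgebra ℝ L] {𝔥 𝔪 𝔪₀ : Submodule ℝ L}
  {pr : L →ₗ[ℝ] L} {X : L}

theorem IsRandersEquigeodesicVector.isRiemannianEquigeodesicVector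
    (hX : IsRandersEquigeodesicVector 𝔥 𝔪 𝔪₀ pr X) :
    IsRiemannianEquigeodesicVector 𝔥 𝔪 pr X := fun α hα Z hZ => by
  simpa using hX α hα 0 𝔪₀.zero_mem (by simp) Z hZ

theorem IsRandersEquigeodesicVector.apply_pr_lie_eq_zero
    (hX : IsRandersEquigeodesicVector 𝔥 𝔪 𝔪₀ pr X) {α : L →ₗ[ℝ] L →ₗ[ℝ] ℝ}
    (hα : IsInvariantInnerOn 𝔥 𝔪 α) (hαX : 0 < α X X) {v : L} (hv : v ∈ 𝔪₀)
    {Z : L} (hZ : Z ∈ 𝔪) : α (pr ⁅X, Z⁆) v = 0 := by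
  set t : ℝ := (|α v v| + 1)⁻¹
  have ht : 0 < t := by positivity
  have hsmall : α (t • v) (t • v) < 1 := by
    have ht1 : t ≤ 1 := inv_le_one_of_one_le₀ (by linarith [abs_nonneg (α v v)])
    simp only [map_smul, LinearMap.smul_apply, smul_eq_mul]
    calc t * (t * α v v) ≤ t * (t * |α v v|) := by gcongr; exact le_abs_self _
      _ ≤ t * |α v v| := mul_le_of_le_one_left (by positivity) ht1
      _ < t * (|α v v| + 1) := by gcongr; linarith
      _ = 1 := inv_mul_cancel₀ (by positivity)
  have h := hX α hα (t • v) (𝔪₀.smul_mem t hv) hsmall Z hZ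
  rw [hX.isRiemannianEquigeodesicVector α hα Z hZ, zero_add, map_smul, smul_eq_mul] at h
  simpa [(Real.sqrt_pos.mpr hαX).ne', ht.ne'] using h

theorem isRandersEquigeodesicVector_of_forall_apply_pr_lie_eq_zero
    (hX : IsRiemannianEquigeodesicVector 𝔥 𝔪 pr X)
    (h : ∀ α : L →ₗ[ℝ] L →ₗ[ℝ] ℝ, IsInvariantInnerOn 𝔥 𝔪 α →
      ∀ u ∈ 𝔪₀, ∀ Z ∈ 𝔪, α (pr ⁅X, Z⁆) u = 0) :
    IsRandersEquigeodesicVector 𝔥 𝔪 𝔪₀ pr X := fun α hα u hu _ Z hZ => by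
  rw [hX α hα Z hZ, h α hα u hu Z hZ, mul_zero, add_zero]

variable {B : L →ₗ[ℝ] L →ₗ[ℝ] ℝ}

theorem lie_mem_of_mem_orthogonal (hBinv : ∀ x y z : L, B ⁅z, x⁆ y + B x ⁅z, y⁆ = 0)
    (h𝔥 : ∀ x ∈ 𝔥, ∀ y ∈ 𝔥, ⁅x, y⁆ ∈ 𝔥) (h𝔪 : ∀ v : L, v ∈ 𝔪 ↔ ∀ w ∈ 𝔥, B v w = 0)
    {w v : L} (hw : w ∈ 𝔥) (hv : v ∈ 𝔪) : ⁅w, v⁆ ∈ 𝔪 := by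
  refine (h𝔪 _).2 fun w' hw' => ?_
  have := hBinv v w' w
  rw [(h𝔪 v).1 hv _ (h𝔥 w hw w' hw'), add_zero] at this
  exact this

theorem apply_pr_left (hBsymm : ∀ x y : L, B x y = B y x)
    (h𝔪 : ∀ v ∈ 𝔪, ∀ w ∈ 𝔥, B v w = 0) (hpr : ∀ x : L, x - pr x ∈ 𝔥)
    (x : L) {v : L} (hv : v ∈ 𝔪) : B (pr x) v = B x v := by
  have h := h𝔪 v hv _ (hpr x)
  rw [hBsymm, map_sub, LinearMap.sub_apply] at h
  linarith

theorem apply_pr_lie_eq_zero_of_lie_mem (hBsymm : ∀ x y : L, B x y = B y x)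
    (hBinv : ∀ x y z : L, B ⁅z, x⁆ y + B x ⁅z, y⁆ = 0)
    (h𝔪 : ∀ v ∈ 𝔪, ∀ w ∈ 𝔥, B v w = 0) (hpr : ∀ x : L, x - pr x ∈ 𝔥)
    {v : L} (hv : v ∈ 𝔪) (hXv : ⁅X, v⁆ ∈ 𝔥) {Z : L} (hZ : Z ∈ 𝔪) :
    B (pr ⁅X, Z⁆) v = 0 := by
  have := hBinv Z v X
  rw [h𝔪 Z hZ _ hXv, add_zero] at this
  rw [apply_pr_left hBsymm h𝔪 hpr _ hv, this]

theorem lie_mem_of_forall_apply_pr_lie_eq_zero (hBsymm : ∀ x y : L, B x y = B y x)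
    (hBpos : ∀ x : L, x ≠ 0 → 0 < B x x) (hBinv : ∀ x y z : L, B ⁅z, x⁆ y + B x ⁅z, y⁆ = 0)
    (h𝔪 : ∀ v ∈ 𝔪, ∀ w ∈ 𝔥, B v w = 0) (hpr : ∀ x : L, pr x ∈ 𝔪 ∧ x - pr x ∈ 𝔥)
    {v : L} (hv : v ∈ 𝔪) (h : ∀ Z ∈ 𝔪, B (pr ⁅X, Z⁆) v = 0) : ⁅X, v⁆ ∈ 𝔥 := by
  set m := pr ⁅X, v⁆
  have hm : m ∈ 𝔪 := (hpr _).1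
  have hprl := apply_pr_left hBsymm h𝔪 fun x => (hpr x).2
  have hmm : B m m = 0 := by
    calc B m m = B ⁅X, v⁆ m := hprl _ hm
      _ = -B ⁅X, m⁆ v := by rw [hBsymm ⁅X, m⁆]; linarith [hBinv v m X]
      _ = -B (pr ⁅X, m⁆) v := by rw [hprl _ hv]
      _ = 0 := by rw [h m hm, neg_zero]
  have hm0 : m = 0 := by_contra fun hm0 => (hBpos m hm0).ne' hmm
  have hdiff : ⁅X, v⁆ - m ∈ 𝔥 := (hpr _).2
  rwa [hm0, sub_zero] at hdiff

theorem mem_of_forall_apply_eq_apply (hBpos : ∀ x : L, x ≠ 0 → 0 < B x x)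
    (hBinv : ∀ x y z : L, B ⁅z, x⁆ y + B x ⁅z, y⁆ = 0)
    (h𝔥𝔪 : ∀ w ∈ 𝔥, ∀ v ∈ 𝔪, ⁅w, v⁆ ∈ 𝔪)
    (h𝔪₀ : ∀ v : L, v ∈ 𝔪₀ ↔ v ∈ 𝔪 ∧ ∀ w ∈ 𝔥, ⁅w, v⁆ = 0)
    {α : L →ₗ[ℝ] L →ₗ[ℝ] ℝ} (hα : IsInvariantInnerOn 𝔥 𝔪 α) {u u' : L} (hu : u ∈ 𝔪₀)
    (hu'𝔪 : u' ∈ 𝔪) (hu' : ∀ m ∈ 𝔪, B u' m = α m u) : u' ∈ 𝔪₀ := by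
  obtain ⟨hu𝔪, hucomm⟩ := (h𝔪₀ u).1 hu
  refine (h𝔪₀ u').2 ⟨hu'𝔪, fun w hw => ?_⟩
  set c := ⁅w, u'⁆
  have hc : c ∈ 𝔪 := h𝔥𝔪 w hw u' hu'𝔪
  have hcc : B c c = 0 := by
    calc B c c = -B u' ⁅w, c⁆ := by linarith [hBinv u' c w]
      _ = -α ⁅w, c⁆ u := by rw [hu' _ (h𝔥𝔪 w hw c hc)]
      _ = α c ⁅w, u⁆ := by linarith [hα.2.2 w hw c hc u hu𝔪]
      _ = 0 := by rw [hucomm w hw, map_zero]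
  exact by_contra fun hc0 => (hBpos c hc0).ne' hcc

end

theorem randers_equigeodesic_iff_riemannian_and_bracket_general
    {L : Type*} [LieRing L] [LieAlgebra ℝ L] [FiniteDimensional ℝ L]
    (B : L →ₗ[ℝ] L →ₗ[ℝ] ℝ)
    (hBsymm : ∀ x y : L, B x y = B y x)
    (hBpos : ∀ x : L, x ≠ 0 → 0 < B x x)
    (hBinv : ∀ x y z : L, B ⁅z, x⁆ y + B x ⁅z, y⁆ = 0)
    (𝔥 : Submodule ℝ L) (h𝔥 : ∀ x ∈ 𝔥, ∀ y ∈ 𝔥, ⁅x, y⁆ ∈ 𝔥)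
    (𝔪 : Submodule ℝ L) (h𝔪 : ∀ v : L, v ∈ 𝔪 ↔ ∀ w ∈ 𝔥, B v w = 0)
    (pr : L →ₗ[ℝ] L) (hpr : ∀ x : L, pr x ∈ 𝔪 ∧ x - pr x ∈ 𝔥)
    (𝔪₀ : Submodule ℝ L)
    (h𝔪₀ : ∀ v : L, v ∈ 𝔪₀ ↔ v ∈ 𝔪 ∧ ∀ w ∈ 𝔥, ⁅w, v⁆ = 0)
    (X : L) (hX0 : X ≠ 0) :
    IsRandersEquigeodesicVector 𝔥 𝔪 𝔪₀ pr X ↔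
      (IsRiemannianEquigeodesicVector 𝔥 𝔪 pr X ∧ ∀ v ∈ 𝔪₀, ⁅X, v⁆ ∈ 𝔥) := by
  have h𝔪' : ∀ v ∈ 𝔪, ∀ w ∈ 𝔥, B v w = 0 := fun v => (h𝔪 v).1
  have hB : IsInvariantInnerOn 𝔥 𝔪 B :=
    ⟨fun u _ v _ => hBsymm u v, fun u _ => hBpos u, fun w _ u _ v _ => hBinv u v w⟩
  constructor
  · intro hX
    refine ⟨hX.isRiemannianEquigeodesicVector, fun v hv => ?_⟩
    exact lie_mem_of_forall_apply_pr_lie_eq_zero hBsymm hBpos hBinv h𝔪' hpr ((h𝔪₀ v).1 hv).1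
      fun Z hZ => hX.apply_pr_lie_eq_zero hB (hBpos X hX0) hv hZ
  · rintro ⟨hX, hbr⟩
    refine isRandersEquigeodesicVector_of_forall_apply_pr_lie_eq_zero hX fun α hα u hu Z hZ => ?_
    obtain ⟨u', hu'𝔪, hu'⟩ := LinearMap.BilinForm.exists_mem_forall_apply_eq_of_anisotropicOn B
      (W := 𝔪) (fun v _ hv => by_contra fun h => (hBpos v h).ne' hv) (α.flip u)
    have hu'₀ : u' ∈ 𝔪₀ := mem_of_forall_apply_eq_apply hBpos hBinv
      (fun _ hw _ hv => lie_mem_of_mem_orthogonal hBinv h𝔥 h𝔪 hw hv) h𝔪₀ hα hu hu'𝔪 hu'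
    calc α (pr ⁅X, Z⁆) u = B u' (pr ⁅X, Z⁆) := (hu' _ (hpr _).1).symm
      _ = B (pr ⁅X, Z⁆) u' := hBsymm _ _
      _ = 0 := apply_pr_lie_eq_zero_of_lie_mem hBsymm hBinv h𝔪' (fun x => (hpr x).2)
        hu'𝔪 (hbr u' hu'₀) hZ

/-- **Criterion for Randers equigeodesic vectors (Theorem 1, (1) ⟺ (3)).**
For `X ∈ 𝔪 \ {0}`, `X` is a Randers equigeodesic vector if and only if `X` is a
Riemannian equigeodesic vector and `⁅X, 𝔪₀⁆ ⊆ 𝔥`. -/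
theorem randers_equigeodesic_iff_riemannian_and_bracket
    {L : Type*} [LieRing L] [LieAlgebra ℝ L] [FiniteDimensional ℝ L]
    (B : L →ₗ[ℝ] L →ₗ[ℝ] ℝ)
    (hBsymm : ∀ x y : L, B x y = B y x)
    (hBpos : ∀ x : L, x ≠ 0 → 0 < B x x)
    (hBinv : ∀ x y z : L, B ⁅z, x⁆ y + B x ⁅z, y⁆ = 0)
    (𝔥 : Submodule ℝ L) (h𝔥 : ∀ x ∈ 𝔥, ∀ y ∈ 𝔥, ⁅x, y⁆ ∈ 𝔥)
    (𝔪 : Submodule ℝ L) (h𝔪 : ∀ v : L, v ∈ 𝔪 ↔ ∀ w ∈ 𝔥, B v w = 0)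
    (pr : L →ₗ[ℝ] L) (hpr : ∀ x : L, pr x ∈ 𝔪 ∧ x - pr x ∈ 𝔥)
    (𝔪₀ : Submodule ℝ L)
    (h𝔪₀ : ∀ v : L, v ∈ 𝔪₀ ↔ v ∈ 𝔪 ∧ ∀ w ∈ 𝔥, ⁅w, v⁆ = 0)
    (h𝔪₀ne : 𝔪₀ ≠ ⊥)
    (X : L) (hX𝔪 : X ∈ 𝔪) (hX0 : X ≠ 0) :
    IsRandersEquigeodesicVector 𝔥 𝔪 𝔪₀ pr X ↔
      (IsRiemannianEquigeodesicVector 𝔥 𝔪 pr X ∧ ∀ v ∈ 𝔪₀, ⁅X, v⁆ ∈ 𝔥) :=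
  randers_equigeodesic_iff_riemannian_and_bracket_general B hBsymm hBpos hBinv 𝔥 h𝔥 𝔪 h𝔪 pr hpr 𝔪₀
    h𝔪₀ X hX0
end

section
/- Let 𝔤 be a finite-dimensional real Lie algebra with an invariant inner product ⟨·,·⟩ (i.e. ⟨⁅z,x⁆,y⟩ + ⟨x,⁅z,y⁆⟩ = 0 for all x,y,z ∈ 𝔤), 𝔥 ⊆ 𝔤 a Lie subalgebra, 𝔪 = 𝔥^⊥, pr_𝔪 the orthogonal projection onto 𝔪, and 𝔪₀ = {v ∈ 𝔪 : ⁅w,v⁆ = 0 for all w ∈ 𝔥}; assume 𝔪₀ ≠ 0. If X ∈ 𝔪 \ {0} is a Riemannian equigeodesic vector and ⁅X, v⁆ ∈ 𝔥 for every v ∈ 𝔪₀, then X is an (α,β) equigeodesic vector. -/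
/-- `X` is an (α,β) equigeodesic vector: Yan's geodesic-vector criterion holds for every
invariant (α,β) metric `F(y) = √(α(y,y))·φ(α(y,u)/√(α(y,y)))`.  That is, for every
invariant inner product `α` on `𝔪`, every `u ∈ 𝔪₀ \ {0}` with `b := √(α(u,u))`, every
smooth `φ : ℝ → ℝ` with `φ(s) > 0` and `φ(s) − s·φ′(s) + (b² − s²)·φ″(s) > 0` for
`|s| ≤ b`, and every `Z ∈ 𝔪`, one has
`α(pr_𝔪 ⁅X,Z⁆, (φ(s₀) − s₀·φ′(s₀))·X + φ′(s₀)·√(α(X,X))·u) = 0` with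
`s₀ = α(X,u)/√(α(X,X))`. -/
def IsAlphaBetaEquigeodesicVector {L : Type*} [LieRing L] [LieAlgebra ℝ L]
    (𝔥 𝔪 𝔪₀ : Submodule ℝ L) (pr : L →ₗ[ℝ] L) (X : L) : Prop :=
  ∀ α : L →ₗ[ℝ] L →ₗ[ℝ] ℝ, IsInvariantInnerOn 𝔥 𝔪 α →
    ∀ u ∈ 𝔪₀, u ≠ 0 →
      ∀ φ : ℝ → ℝ, ContDiff ℝ (⊤ : ℕ∞) φ →
        (∀ s : ℝ, |s| ≤ Real.sqrt (α u u) → 0 < φ s) →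
        (∀ s : ℝ, |s| ≤ Real.sqrt (α u u) →
          0 < φ s - s * deriv φ s + (Real.sqrt (α u u) ^ 2 - s ^ 2) * deriv (deriv φ) s) →
        ∀ Z ∈ 𝔪,
          α (pr ⁅X, Z⁆)
            ((φ (α X u / Real.sqrt (α X X)) -
                (α X u / Real.sqrt (α X X)) * deriv φ (α X u / Real.sqrt (α X X))) • X +
              (deriv φ (α X u / Real.sqrt (α X X)) * Real.sqrt (α X X)) • u) = 0

theorem aux_equigeo
    {L : Type*} [LieRing L] [LieAlgebra ℝ L] [FiniteDimensional ℝ L]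
    (B : L →ₗ[ℝ] L →ₗ[ℝ] ℝ)
    (hBsymm : ∀ x y : L, B x y = B y x)
    (hBpos : ∀ x : L, x ≠ 0 → 0 < B x x)
    (hBinv : ∀ x y z : L, B ⁅z, x⁆ y + B x ⁅z, y⁆ = 0)
    (𝔥 : Submodule ℝ L) (h𝔥 : ∀ x ∈ 𝔥, ∀ y ∈ 𝔥, ⁅x, y⁆ ∈ 𝔥)
    (𝔪 : Submodule ℝ L) (h𝔪 : ∀ v : L, v ∈ 𝔪 ↔ ∀ w ∈ 𝔥, B v w = 0)
    (pr : L →ₗ[ℝ] L) (hpr : ∀ x : L, pr x ∈ 𝔪 ∧ x - pr x ∈ 𝔥)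
    (𝔪₀ : Submodule ℝ L)
    (h𝔪₀ : ∀ v : L, v ∈ 𝔪₀ ↔ v ∈ 𝔪 ∧ ∀ w ∈ 𝔥, ⁅w, v⁆ = 0)
    (X : L) (hX𝔪 : X ∈ 𝔪)
    (hbr : ∀ v ∈ 𝔪₀, ⁅X, v⁆ ∈ 𝔥)
    (α : L →ₗ[ℝ] L →ₗ[ℝ] ℝ)
    (hαsymm : ∀ u ∈ 𝔪, ∀ v ∈ 𝔪, α u v = α v u)
    (hαpos : ∀ u ∈ 𝔪, u ≠ 0 → 0 < α u u)
    (hαinv : ∀ w ∈ 𝔥, ∀ u ∈ 𝔪, ∀ v ∈ 𝔪, α ⁅w, u⁆ v + α u ⁅w, v⁆ = 0)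
    (u : L) (hu𝔪₀ : u ∈ 𝔪₀) (Z : L) (hZ : Z ∈ 𝔪) :
    α (pr ⁅X, Z⁆) u = 0 := by
  have hu𝔪 : u ∈ 𝔪 := ((h𝔪₀ u).mp hu𝔪₀).1
  -- brackets of 𝔥 with 𝔪 stay in 𝔪
  have hbm : ∀ w ∈ 𝔥, ∀ m ∈ 𝔪, ⁅w, m⁆ ∈ 𝔪 := by
    intro w hw m hm
    rw [h𝔪]
    intro x hx
    have h1 := hBinv m x w
    have h2 : B m ⁅w, x⁆ = 0 := (h𝔪 m).mp hm _ (h𝔥 w hw x hx)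
    linarith
  set N := pr ⁅X, Z⁆ with hNdef
  have hN𝔪 : N ∈ 𝔪 := (hpr _).1
  -- N is B-orthogonal to 𝔪₀
  have hNB : ∀ q ∈ 𝔪₀, B N q = 0 := by
    intro q hq
    have hq𝔪 : q ∈ 𝔪 := ((h𝔪₀ q).mp hq).1
    have h1 := hBinv Z q X
    have h2 : B Z ⁅X, q⁆ = 0 := (h𝔪 Z).mp hZ _ (hbr q hq)
    have h3 : B ⁅X, Z⁆ q = 0 := by linarith
    have h4 : B q (⁅X, Z⁆ - N) = 0 := (h𝔪 q).mp hq𝔪 _ (hpr ⁅X, Z⁆).2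
    have h5 : B (⁅X, Z⁆ - N) q = 0 := by rw [hBsymm]; exact h4
    have h6 : B (⁅X, Z⁆ - N) q = B ⁅X, Z⁆ q - B N q := by
      simp [map_sub]
    linarith
  -- restricted forms
  set b : LinearMap.BilinForm ℝ 𝔪 := LinearMap.BilinForm.restrict B 𝔪 with hbdef
  set a : LinearMap.BilinForm ℝ 𝔪 := LinearMap.BilinForm.restrict α 𝔪 with hadef
  have hbnd : b.Nondegenerate := by
    constructor
    all_goals
      intro m hm
      by_contra hm0
      have hm0' : (m : L) ≠ 0 := fun h => hm0 (Subtype.ext h)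
      have := hBpos m hm0'
      have := hm m
      simp only [hbdef, LinearMap.BilinForm.restrict_apply, LinearMap.domRestrict_apply] at this
      linarith
  set Tu : 𝔪 := (b.toDual hbnd).symm (a ⟨u, hu𝔪⟩) with hTudef
  have hT : ∀ w : 𝔪, B (Tu : L) (w : L) = α u (w : L) := by
    intro w
    have h1 : b.toDual hbnd Tu = a ⟨u, hu𝔪⟩ := by
      rw [hTudef]; exact (b.toDual hbnd).apply_symm_apply _
    have h2 : b.toDual hbnd Tu w = a ⟨u, hu𝔪⟩ w := by rw [h1]
    rw [LinearMap.BilinForm.toDual_def] at h2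
    simp only [hbdef, hadef, LinearMap.BilinForm.restrict_apply, LinearMap.domRestrict_apply] at h2
    exact h2
  -- Tu ∈ 𝔪₀
  have hTu𝔪₀ : (Tu : L) ∈ 𝔪₀ := by
    rw [h𝔪₀]
    refine ⟨Tu.2, ?_⟩
    intro w hw
    have hbrTu : ⁅w, (Tu : L)⁆ ∈ 𝔪 := hbm w hw _ Tu.2
    have hall : ∀ x ∈ 𝔪, B ⁅w, (Tu : L)⁆ x = 0 := by
      intro x hx
      have h1 := hBinv (Tu : L) x w
      have h2 : B (Tu : L) ⁅w, x⁆ = α u ⁅w, x⁆ := hT ⟨⁅w, x⁆, hbm w hw x hx⟩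
      have h3 := hαinv w hw u hu𝔪 x hx
      have h4 : ⁅w, u⁆ = (0 : L) := ((h𝔪₀ u).mp hu𝔪₀).2 w hw
      rw [h4] at h3
      simp only [map_zero, LinearMap.zero_apply] at h3
      linarith
    by_contra hne
    have := hBpos _ hne
    have := hall _ hbrTu
    linarith
  have h1 : α u N = 0 := by
    have h2 : B (Tu : L) N = α u N := hT ⟨N, hN𝔪⟩
    have h3 : B N (Tu : L) = 0 := hNB _ hTu𝔪₀
    rw [hBsymm] at h3
    linarith
  rw [hαsymm N hN𝔪 u hu𝔪]
  exact h1


/-- **Theorem 1, (3) ⟹ (1).**  If `X ∈ 𝔪 \ {0}` is a Riemannian equigeodesic vector and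
`⁅X, 𝔪₀⁆ ⊆ 𝔥`, then `X` is an (α,β) equigeodesic vector. -/
theorem alphaBeta_equigeodesic_of_riemannian_and_bracket
    {L : Type*} [LieRing L] [LieAlgebra ℝ L] [FiniteDimensional ℝ L]
    (B : L →ₗ[ℝ] L →ₗ[ℝ] ℝ)
    (hBsymm : ∀ x y : L, B x y = B y x)
    (hBpos : ∀ x : L, x ≠ 0 → 0 < B x x)
    (hBinv : ∀ x y z : L, B ⁅z, x⁆ y + B x ⁅z, y⁆ = 0)
    (𝔥 : Submodule ℝ L) (h𝔥 : ∀ x ∈ 𝔥, ∀ y ∈ 𝔥, ⁅x, y⁆ ∈ 𝔥)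
    (𝔪 : Submodule ℝ L) (h𝔪 : ∀ v : L, v ∈ 𝔪 ↔ ∀ w ∈ 𝔥, B v w = 0)
    (pr : L →ₗ[ℝ] L) (hpr : ∀ x : L, pr x ∈ 𝔪 ∧ x - pr x ∈ 𝔥)
    (𝔪₀ : Submodule ℝ L)
    (h𝔪₀ : ∀ v : L, v ∈ 𝔪₀ ↔ v ∈ 𝔪 ∧ ∀ w ∈ 𝔥, ⁅w, v⁆ = 0)
    (h𝔪₀ne : 𝔪₀ ≠ ⊥)
    (X : L) (hX𝔪 : X ∈ 𝔪) (hX0 : X ≠ 0)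
    (hRiem : IsRiemannianEquigeodesicVector 𝔥 𝔪 pr X)
    (hbr : ∀ v ∈ 𝔪₀, ⁅X, v⁆ ∈ 𝔥) :
    IsAlphaBetaEquigeodesicVector 𝔥 𝔪 𝔪₀ pr X := by
  intro α hα u hu𝔪₀ hu0 φ hφ hp1 hp2 Z hZ
  obtain ⟨hαsymm, hαpos, hαinv⟩ := hα
  have h1 : α (pr ⁅X, Z⁆) X = 0 := hRiem α ⟨hαsymm, hαpos, hαinv⟩ Z hZ
  have h2 : α (pr ⁅X, Z⁆) u = 0 :=
    aux_equigeo B hBsymm hBpos hBinv 𝔥 h𝔥 𝔪 h𝔪 pr hpr 𝔪₀ h𝔪₀ X hX𝔪 hbr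
      α hαsymm hαpos hαinv u hu𝔪₀ Z hZ
  simp [map_add, map_smul, h1, h2]
end

section
/- Let 𝔤 be a finite-dimensional real Lie algebra with an invariant inner product ⟨·,·⟩ (i.e. ⟨⁅z,x⁆,y⟩ + ⟨x,⁅z,y⁆⟩ = 0 for all x,y,z ∈ 𝔤). Let 𝔨 ⊆ 𝔤 be a Lie subalgebra and 𝔥 ⊆ 𝔨 an ideal of 𝔨; let 𝔪₀ be the orthogonal complement of 𝔥 in 𝔨, 𝔪′ the orthogonal complement of 𝔨 in 𝔤, and 𝔪 = 𝔪₀ ⊕ 𝔪′. Assume 𝔪′ is a nonzero irreducible 𝔨-module under the adjoint action, and assume neither 𝔥 nor 𝔪₀ is an ideal of 𝔤. Then for X ∈ 𝔪 \ {0}, X is a Randers equigeodesic vector if and only if X ∈ 𝔪₀ and ⁅X, v⁆ = 0 for all v ∈ 𝔪₀ (i.e. X lies in the center 𝔠(𝔪₀) of the Lie algebra 𝔪₀). -/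
/-- **Theorem 2.**  Let `𝔥 ⊆ 𝔨 ⊆ 𝔤` with `𝔥` an ideal of the subalgebra `𝔨`,
`𝔪₀ = 𝔥ᗮ ∩ 𝔨`, `𝔪′ = 𝔨ᗮ`, `𝔪 = 𝔪₀ ⊕ 𝔪′`.  Suppose `𝔪′` is a nonzero irreducible
`𝔨`-module under the adjoint action and neither `𝔥` nor `𝔪₀` is an ideal of `𝔤`.
Then for `X ∈ 𝔪 \ {0}`, `X` is a Randers equigeodesic vector if and only if
`X ∈ 𝔠(𝔪₀)`, i.e. `X ∈ 𝔪₀` and `⁅X, 𝔪₀⁆ = 0`. -/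
theorem randers_equigeodesic_iff_mem_center_of_m0
    {L : Type*} [LieRing L] [LieAlgebra ℝ L] [FiniteDimensional ℝ L]
    (B : L →ₗ[ℝ] L →ₗ[ℝ] ℝ)
    (hBsymm : ∀ x y : L, B x y = B y x)
    (hBpos : ∀ x : L, x ≠ 0 → 0 < B x x)
    (hBinv : ∀ x y z : L, B ⁅z, x⁆ y + B x ⁅z, y⁆ = 0)
    (𝔨 : Submodule ℝ L) (h𝔨 : ∀ x ∈ 𝔨, ∀ y ∈ 𝔨, ⁅x, y⁆ ∈ 𝔨)
    (𝔥 : Submodule ℝ L) (h𝔥𝔨 : 𝔥 ≤ 𝔨)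
    (h𝔥ideal : ∀ x ∈ 𝔨, ∀ y ∈ 𝔥, ⁅x, y⁆ ∈ 𝔥)
    (𝔪₀ : Submodule ℝ L)
    (h𝔪₀ : ∀ v : L, v ∈ 𝔪₀ ↔ v ∈ 𝔨 ∧ ∀ w ∈ 𝔥, B v w = 0)
    (𝔪' : Submodule ℝ L)
    (h𝔪' : ∀ v : L, v ∈ 𝔪' ↔ ∀ w ∈ 𝔨, B v w = 0)
    (𝔪 : Submodule ℝ L) (h𝔪 : 𝔪 = 𝔪₀ ⊔ 𝔪')
    (h𝔪'ne : 𝔪' ≠ ⊥)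
    (h𝔪'irr : ∀ W : Submodule ℝ L, W ≤ 𝔪' →
      (∀ x ∈ 𝔨, ∀ v ∈ W, ⁅x, v⁆ ∈ W) → W = ⊥ ∨ W = 𝔪')
    (h𝔥notideal : ¬ (∀ x : L, ∀ v ∈ 𝔥, ⁅x, v⁆ ∈ 𝔥))
    (h𝔪₀notideal : ¬ (∀ x : L, ∀ v ∈ 𝔪₀, ⁅x, v⁆ ∈ 𝔪₀))
    (pr : L →ₗ[ℝ] L) (hpr : ∀ x : L, pr x ∈ 𝔪 ∧ x - pr x ∈ 𝔥)
    (X : L) (hX𝔪 : X ∈ 𝔪) (hX0 : X ≠ 0) :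
    IsRandersEquigeodesicVector 𝔥 𝔪 𝔪₀ pr X ↔
      (X ∈ 𝔪₀ ∧ ∀ v ∈ 𝔪₀, ⁅X, v⁆ = 0) := by
  have h𝔪₀𝔪 : 𝔪₀ ≤ 𝔪 := by rw [h𝔪]; exact le_sup_left
  have h𝔪'𝔪 : 𝔪' ≤ 𝔪 := by rw [h𝔪]; exact le_sup_right
  have h𝔪₀𝔨 : ∀ v ∈ 𝔪₀, v ∈ 𝔨 := fun v hv => ((h𝔪₀ v).mp hv).1
  have hBzero : ∀ x : L, B x x = 0 → x = 0 := by
    intro x hx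
    by_contra h0
    have := hBpos x h0
    linarith
  -- F0 : 𝔥 is B-orthogonal to 𝔪
  have F0 : ∀ h ∈ 𝔥, ∀ m ∈ 𝔪, B h m = 0 := by
    intro h hh m hm
    rw [h𝔪] at hm
    obtain ⟨a, ha, b, hb, rfl⟩ := Submodule.mem_sup.mp hm
    have h1 : B h a = 0 := by rw [hBsymm]; exact ((h𝔪₀ a).mp ha).2 h hh
    have h2 : B h b = 0 := by rw [hBsymm]; exact ((h𝔪' b).mp hb) h (h𝔥𝔨 hh)
    rw [map_add, h1, h2, add_zero]
  -- F1 : 𝔥 ∩ 𝔪 = 0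
  have F1 : ∀ x ∈ 𝔥, x ∈ 𝔪 → x = 0 := fun x hx hxm => hBzero x (F0 x hx x hxm)
  -- F2 : pr is the identity on 𝔪
  have F2 : ∀ m ∈ 𝔪, pr m = m := by
    intro m hm
    have h1 : m - pr m ∈ 𝔪 := 𝔪.sub_mem hm (hpr m).1
    have h2 := F1 _ (hpr m).2 h1
    exact (sub_eq_zero.mp h2).symm
  -- F3 : ⁅𝔥, 𝔪₀⁆ = 0
  have F3 : ∀ w ∈ 𝔥, ∀ u ∈ 𝔪₀, ⁅w, u⁆ = 0 := by
    intro w hw u hu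
    apply hBzero
    have hmem : ⁅w, u⁆ ∈ 𝔥 := by
      have h1 : ⁅u, w⁆ ∈ 𝔥 := h𝔥ideal u (h𝔪₀𝔨 u hu) w hw
      rw [← lie_skew]
      exact 𝔥.neg_mem h1
    have h2 := hBinv u ⁅w, u⁆ w
    have h3 : B u ⁅w, ⁅w, u⁆⁆ = 0 :=
      ((h𝔪₀ u).mp hu).2 _ (h𝔥ideal w (h𝔥𝔨 hw) _ hmem)
    linarith
  -- F4 : 𝔪₀ is a subalgebra
  have F4 : ∀ u ∈ 𝔪₀, ∀ v ∈ 𝔪₀, ⁅u, v⁆ ∈ 𝔪₀ := by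
    intro u hu v hv
    refine (h𝔪₀ _).mpr ⟨h𝔨 u (h𝔪₀𝔨 u hu) v (h𝔪₀𝔨 v hv), fun w hw => ?_⟩
    have h1 := hBinv v w u
    have h2 : B v ⁅u, w⁆ = 0 := ((h𝔪₀ v).mp hv).2 _ (h𝔥ideal u (h𝔪₀𝔨 u hu) w hw)
    linarith
  -- F5 : ⁅𝔨, 𝔪'⁆ ⊆ 𝔪'
  have F5 : ∀ x ∈ 𝔨, ∀ v ∈ 𝔪', ⁅x, v⁆ ∈ 𝔪' := by
    intro x hx v hv
    refine (h𝔪' _).mpr fun y hy => ?_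
    have h1 := hBinv v y x
    have h2 : B v ⁅x, y⁆ = 0 := (h𝔪' v).mp hv _ (h𝔨 x hx y hy)
    linarith
  -- F6 : for x ∈ 𝔨, pr x ∈ 𝔪₀
  have F6 : ∀ x ∈ 𝔨, pr x ∈ 𝔪₀ := by
    intro x hx
    have hk : pr x ∈ 𝔨 := by
      have : pr x = x - (x - pr x) := by abel
      rw [this]
      exact 𝔨.sub_mem hx (h𝔥𝔨 (hpr x).2)
    have hm : pr x ∈ 𝔪 := (hpr x).1
    rw [h𝔪] at hm
    obtain ⟨a, ha, b, hb, hab⟩ := Submodule.mem_sup.mp hm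
    have hb0 : b = 0 := by
      apply hBzero
      have h1 : B b (a + b) = 0 := by
        rw [hab]
        exact (h𝔪' b).mp hb _ hk
      have h2 : B b a = 0 := (h𝔪' b).mp hb a (h𝔪₀𝔨 a ha)
      rw [map_add] at h1
      linarith
    rw [← hab, hb0, add_zero]
    exact ha
  -- F7 : any 𝔥-invariant bilinear form pairs 𝔪₀ and 𝔪' to zero
  have F7 : ∀ α : L →ₗ[ℝ] L →ₗ[ℝ] ℝ,
      (∀ w ∈ 𝔥, ∀ u ∈ 𝔪, ∀ v ∈ 𝔪, α ⁅w, u⁆ v + α u ⁅w, v⁆ = 0) →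
      ∀ u ∈ 𝔪₀, ∀ v ∈ 𝔪', α u v = 0 := by
    intro α hαinv u hu v hv
    set s : Set L := {y | ∃ w ∈ 𝔥, ∃ z ∈ 𝔪', ⁅w, z⁆ = y} with hs
    set T : Submodule ℝ L := Submodule.span ℝ s with hT
    have hTle : T ≤ 𝔪' := by
      rw [hT, Submodule.span_le]
      rintro y ⟨w, hw, z, hz, rfl⟩
      exact F5 w (h𝔥𝔨 hw) z hz
    have hTinv : ∀ x ∈ 𝔨, ∀ y ∈ T, ⁅x, y⁆ ∈ T := by
      intro x hx y hy
      induction hy using Submodule.span_induction with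
      | mem y hy =>
        obtain ⟨w, hw, z, hz, rfl⟩ := hy
        rw [leibniz_lie]
        refine T.add_mem ?_ ?_
        · exact Submodule.subset_span ⟨⁅x, w⁆, h𝔥ideal x hx w hw, z, hz, rfl⟩
        · exact Submodule.subset_span ⟨w, hw, ⁅x, z⁆, F5 x hx z hz, rfl⟩
      | zero => rw [lie_zero]; exact T.zero_mem
      | add y z _ _ hy hz => rw [lie_add]; exact T.add_mem hy hz
      | smul c y _ hy => rw [lie_smul]; exact T.smul_mem c hy
    have hTne : T ≠ ⊥ := by
      intro hbot
      apply h𝔥notideal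
      intro x v hv'
      have hdec : x = (x - pr x) + pr x := by abel
      have hm : pr x ∈ 𝔪 := (hpr x).1
      rw [h𝔪] at hm
      obtain ⟨a, ha, b, hb, hab⟩ := Submodule.mem_sup.mp hm
      have h1 : ⁅x - pr x, v⁆ ∈ 𝔥 := h𝔥ideal _ (h𝔥𝔨 (hpr x).2) v hv'
      have h2 : ⁅a, v⁆ = 0 := by
        rw [← lie_skew, F3 v hv' a ha, neg_zero]
      have h3 : ⁅b, v⁆ = 0 := by
        have : ⁅v, b⁆ ∈ T := Submodule.subset_span ⟨v, hv', b, hb, rfl⟩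
        rw [hbot, Submodule.mem_bot] at this
        rw [← lie_skew, this, neg_zero]
      have hx' : x = (x - pr x) + (a + b) := by rw [hab]; abel
      have : ⁅x, v⁆ = ⁅x - pr x, v⁆ + (⁅a, v⁆ + ⁅b, v⁆) := by
        conv_lhs => rw [hx']
        rw [add_lie, add_lie]
      rw [this, h2, h3, add_zero, add_zero]
      exact h1
    have hTeq : T = 𝔪' := (h𝔪'irr T hTle hTinv).resolve_left hTne
    have hvT : v ∈ T := by rw [hTeq]; exact hv
    clear hv
    induction hvT using Submodule.span_induction with
    | mem y hy =>
      obtain ⟨w, hw, z, hz, rfl⟩ := hy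
      have h1 := hαinv w hw u (h𝔪₀𝔪 hu) z (h𝔪'𝔪 hz)
      rw [F3 w hw u hu] at h1
      simpa using h1
    | zero => simp
    | add y z _ _ hy hz => rw [map_add, hy, hz, add_zero]
    | smul c y _ hy => rw [map_smul, hy, smul_zero]
  -- FW : the centralizer of 𝔪₀ in 𝔪' is zero
  have FW : ∀ v ∈ 𝔪', (∀ u ∈ 𝔪₀, ⁅u, v⁆ = 0) → v = 0 := by
    intro v hv hcen
    let W : Submodule ℝ L :=
      { carrier := {y | y ∈ 𝔪' ∧ ∀ u ∈ 𝔪₀, ⁅u, y⁆ = 0}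
        add_mem' := by
          rintro a b ⟨ha1, ha2⟩ ⟨hb1, hb2⟩
          exact ⟨𝔪'.add_mem ha1 hb1, fun u hu => by
            rw [lie_add, ha2 u hu, hb2 u hu, add_zero]⟩
        zero_mem' := ⟨𝔪'.zero_mem, fun u _ => lie_zero u⟩
        smul_mem' := by
          rintro c a ⟨ha1, ha2⟩
          exact ⟨𝔪'.smul_mem c ha1, fun u hu => by
            rw [lie_smul, ha2 u hu, smul_zero]⟩ }
    have hWle : W ≤ 𝔪' := fun y hy => hy.1
    have hWinv : ∀ x ∈ 𝔨, ∀ y ∈ W, ⁅x, y⁆ ∈ W := by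
      intro x hx y hy
      obtain ⟨hy1, hy2⟩ := hy
      have hdec : x = (x - pr x) + pr x := by abel
      have hstep : ∀ z : L, (z ∈ 𝔥 ∨ z ∈ 𝔪₀) → ⁅z, y⁆ ∈ W := by
        rintro z (hz | hz)
        · refine ⟨F5 z (h𝔥𝔨 hz) y hy1, fun u hu => ?_⟩
          rw [leibniz_lie]
          have h1 : ⁅u, z⁆ = 0 := by
            rw [← lie_skew, F3 z hz u hu, neg_zero]
          rw [h1, zero_lie, hy2 u hu, lie_zero, add_zero]
        · refine ⟨F5 z (h𝔪₀𝔨 z hz) y hy1, fun u hu => ?_⟩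
          rw [leibniz_lie, hy2 _ (F4 u hu z hz), hy2 u hu, lie_zero, add_zero]
      have h1 : ⁅x - pr x, y⁆ ∈ W := hstep _ (Or.inl (hpr x).2)
      have h2 : ⁅pr x, y⁆ ∈ W := hstep _ (Or.inr (F6 x hx))
      have : ⁅x, y⁆ = ⁅x - pr x, y⁆ + ⁅pr x, y⁆ := by
        conv_lhs => rw [hdec]
        rw [add_lie]
      rw [this]
      exact W.add_mem h1 h2
    have hWbot : W = ⊥ := by
      refine (h𝔪'irr W hWle hWinv).resolve_right ?_
      intro hWeq
      apply h𝔪₀notideal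
      intro x u hu
      have hdec : x = (x - pr x) + pr x := by abel
      have hm : pr x ∈ 𝔪 := (hpr x).1
      rw [h𝔪] at hm
      obtain ⟨a, ha, b, hb, hab⟩ := Submodule.mem_sup.mp hm
      have h1 : ⁅x - pr x, u⁆ = 0 := F3 _ (hpr x).2 u hu
      have h2 : ⁅a, u⁆ ∈ 𝔪₀ := F4 a ha u hu
      have h3 : ⁅b, u⁆ = 0 := by
        have hbW : b ∈ W := by rw [hWeq]; exact hb
        rw [← lie_skew, hbW.2 u hu, neg_zero]
      have hx' : x = (x - pr x) + (a + b) := by rw [hab]; abel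
      have : ⁅x, u⁆ = ⁅x - pr x, u⁆ + (⁅a, u⁆ + ⁅b, u⁆) := by
        conv_lhs => rw [hx']
        rw [add_lie, add_lie]
      rw [this, h1, h3, zero_add, add_zero]
      exact h2
    have hvW : v ∈ W := ⟨hv, hcen⟩
    rw [hWbot, Submodule.mem_bot] at hvW
    exact hvW
  -- decomposition of X
  have hX𝔪' := hX𝔪
  rw [h𝔪] at hX𝔪'
  obtain ⟨a, ha, b, hb, hab⟩ := Submodule.mem_sup.mp hX𝔪'
  constructor
  · -- forward direction
    intro hE
    have hB' : IsInvariantInnerOn 𝔥 𝔪 B :=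
      ⟨fun u _ v _ => hBsymm u v, fun u _ h => hBpos u h,
       fun w _ u _ v _ => hBinv u v w⟩
    have hsqrt : 0 < Real.sqrt (B X X) := Real.sqrt_pos.mpr (hBpos X hX0)
    -- G1 : B (pr ⁅X,Z⁆) X = 0
    have G1 : ∀ Z ∈ 𝔪, B (pr ⁅X, Z⁆) X = 0 := by
      intro Z hZ
      have := hE B hB' 0 𝔪₀.zero_mem (by simp) Z hZ
      simpa using this
    -- G2 : B (pr ⁅X,Z⁆) u = 0 for u ∈ 𝔪₀
    have G2 : ∀ Z ∈ 𝔪, ∀ u ∈ 𝔪₀, B (pr ⁅X, Z⁆) u = 0 := by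
      intro Z hZ u hu
      rcases eq_or_ne u 0 with rfl | hu0
      · simp
      have hs : 0 < B u u := hBpos u hu0
      set t : ℝ := (1 + B u u)⁻¹ with ht
      have ht0 : 0 < t := by positivity
      have htu : t • u ∈ 𝔪₀ := 𝔪₀.smul_mem t hu
      have h1s : (0:ℝ) < 1 + B u u := by linarith
      have hbound : B (t • u) (t • u) < 1 := by
        have hcalc : B (t • u) (t • u) = t * (t * B u u) := by
          simp only [map_smul, LinearMap.smul_apply, smul_eq_mul]
        have h2 : t * (t * B u u) = B u u / ((1 + B u u) * (1 + B u u)) := by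
          rw [ht]; field_simp
        rw [hcalc, h2, div_lt_one (by positivity)]
        nlinarith
      have heq := hE B hB' (t • u) htu hbound Z hZ
      rw [G1 Z hZ, zero_add, map_smul, smul_eq_mul] at heq
      have h2 : t * B (pr ⁅X, Z⁆) u = 0 := by
        rcases mul_eq_zero.mp heq with h | h
        · exact absurd h (ne_of_gt hsqrt)
        · exact h
      rcases mul_eq_zero.mp h2 with h | h
      · exact absurd h (ne_of_gt ht0)
      · exact h
    -- Step SA : for u ∈ 𝔪₀, ⁅X, u⁆ ∈ 𝔪
    have hXu𝔪 : ∀ u ∈ 𝔪₀, ⁅X, u⁆ = ⁅a, u⁆ + ⁅b, u⁆ ∧ ⁅a, u⁆ ∈ 𝔪₀ ∧ ⁅b, u⁆ ∈ 𝔪' := by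
      intro u hu
      refine ⟨by rw [← hab, add_lie], F4 a ha u hu, ?_⟩
      have : ⁅u, b⁆ ∈ 𝔪' := F5 u (h𝔪₀𝔨 u hu) b hb
      rw [← lie_skew]
      exact 𝔪'.neg_mem this
    -- SB : ⁅a, u⁆ = 0
    have SB : ∀ u ∈ 𝔪₀, ⁅a, u⁆ = 0 := by
      intro u hu
      obtain ⟨hdecu, hau, hbu⟩ := hXu𝔪 u hu
      have hXum : ⁅X, u⁆ ∈ 𝔪 := by
        rw [hdecu]; exact 𝔪.add_mem (h𝔪₀𝔪 hau) (h𝔪'𝔪 hbu)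
      have h1 := G2 u (h𝔪₀𝔪 hu) ⁅a, u⁆ hau
      rw [F2 _ hXum, hdecu, map_add] at h1
      have h2 : B ⁅b, u⁆ ⁅a, u⁆ = 0 :=
        (h𝔪' _).mp hbu _ (h𝔪₀𝔨 _ hau)
      rw [LinearMap.add_apply] at h1
      apply hBzero
      linarith
    -- SC : ⁅X, u⁆ = 0 for u ∈ 𝔪₀
    have SC : ∀ u ∈ 𝔪₀, ⁅X, u⁆ = 0 := by
      intro u hu
      obtain ⟨hdecu, hau, hbu⟩ := hXu𝔪 u hu
      have hXu' : ⁅X, u⁆ ∈ 𝔪' := by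
        rw [hdecu, SB u hu, zero_add]; exact hbu
      have key : ∀ z' ∈ 𝔪', B z' ⁅X, u⁆ = 0 := by
        intro z' hz'
        have h1 := G2 z' (h𝔪'𝔪 hz') u hu
        have hdiff : ⁅X, z'⁆ - pr ⁅X, z'⁆ ∈ 𝔥 := (hpr ⁅X, z'⁆).2
        have h2 : B (⁅X, z'⁆ - pr ⁅X, z'⁆) u = 0 :=
          F0 _ hdiff u (h𝔪₀𝔪 hu)
        rw [map_sub, LinearMap.sub_apply] at h2
        have h3 : B ⁅X, z'⁆ u = 0 := by linarith
        have h4 := hBinv z' u X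
        linarith
      apply hBzero
      rw [hBsymm]
      exact key _ hXu'
    -- X ∈ 𝔪₀
    have hb0 : b = 0 := by
      apply FW b hb
      intro u hu
      have h1 : ⁅b, u⁆ = 0 := by
        have := SC u hu
        rw [(hXu𝔪 u hu).1, SB u hu, zero_add] at this
        exact this
      rw [← lie_skew, h1, neg_zero]
    have hX𝔪₀ : X ∈ 𝔪₀ := by rw [← hab, hb0, add_zero]; exact ha
    exact ⟨hX𝔪₀, SC⟩
  · -- backward direction
    rintro ⟨hX₀, hXcen⟩ α hα u hu huu Z hZ
    obtain ⟨hαsymm, _, hαinv⟩ := hα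
    rw [h𝔪] at hZ
    obtain ⟨z₀, hz₀, z', hz', hzz⟩ := Submodule.mem_sup.mp hZ
    have h1 : ⁅X, Z⁆ = ⁅X, z'⁆ := by
      rw [← hzz, lie_add, hXcen z₀ hz₀, zero_add]
    have h2 : ⁅X, z'⁆ ∈ 𝔪' := F5 X (h𝔪₀𝔨 X hX₀) z' hz'
    have h3 : pr ⁅X, Z⁆ = ⁅X, z'⁆ := by rw [h1]; exact F2 _ (h𝔪'𝔪 h2)
    have h4 : α (pr ⁅X, Z⁆) X = 0 := by
      rw [h3, hαsymm _ (h𝔪'𝔪 h2) X (h𝔪₀𝔪 hX₀)]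
      exact F7 α hαinv X hX₀ _ h2
    have h5 : α (pr ⁅X, Z⁆) u = 0 := by
      rw [h3, hαsymm _ (h𝔪'𝔪 h2) u (h𝔪₀𝔪 hu)]
      exact F7 α hαinv u hu _ h2
    rw [h4, h5, mul_zero, add_zero]
end

section
/- Let ℍ denote the real quaternions with imaginary units i, j, k, let n ≥ 1, let a, b, c ∈ ℝ, and let w : Fin n → ℍ. Define matrices A, B of size (n+1)×(n+1) over ℍ by: A has entry a·i in position (n,n) and zeros elsewhere; B has entry b·j + c·k in position (n,n), entry w(l) in position (l,n) and entry −conj(w(l)) in position (n,l) for each l < n, and zeros elsewhere. Then the commutator A·B − B·A = 0 if and only if a = 0, or (b = 0 and c = 0 and w = 0). -/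
open Matrix

/-- The quaternion imaginary unit `i`. -/
noncomputable def qi : Quaternion ℝ := ⟨0, 1, 0, 0⟩

/-- The quaternion imaginary unit `j`. -/
noncomputable def qj : Quaternion ℝ := ⟨0, 0, 1, 0⟩

/-- The quaternion imaginary unit `k`. -/
noncomputable def qk : Quaternion ℝ := ⟨0, 0, 0, 1⟩

/-!
A nonzero multiple `x • E` of the elementary matrix `E` at the corner `(n, n)` commutes with `B`
exactly when `x` commutes with the corner entry of `B` and the rest of the last row and column of
`B` vanish, because `ℍ` has no zero divisors. For `x = a • i` with `a ≠ 0`, the last row and column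
of `B` are `-conj w` and `w`, and `a • i` commutes with `b • j + c • k` only if `b = c = 0`, since
`i` anticommutes with both `j` and `k`.
-/

namespace Matrix

variable {n R : Type*} [Fintype n] [DecidableEq n] [NonUnitalNonAssocSemiring R] [NoZeroDivisors R]

theorem commute_single_iff {i : n} {x : R} (hx : x ≠ 0) {M : Matrix n n R} :
    Commute (single i i x) M ↔
      Commute x (M i i) ∧ (∀ j ≠ i, M i j = 0) ∧ ∀ j ≠ i, M j i = 0 := by
  constructor
  · intro h
    have hrow (j) (hj : j ≠ i) : x * M i j = 0 := by
      simpa [hj] using congrFun (congrFun h i) j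
    have hcol (j) (hj : j ≠ i) : M j i * x = 0 := by
      simpa [hj] using (congrFun (congrFun h j) i).symm
    refine ⟨(by simpa using congrFun (congrFun h i) i : x * M i i = M i i * x),
      fun j hj => ?_, fun j hj => ?_⟩
    · exact (mul_eq_zero.mp (hrow j hj)).resolve_left hx
    · exact (mul_eq_zero.mp (hcol j hj)).resolve_right hx
  · rintro ⟨hii, hrow, hcol⟩
    ext p q
    by_cases hp : p = i <;> by_cases hq : q = i
    · subst hp hq; simpa using hii.eq
    · subst hp; simp [hq, hrow q hq]
    · subst hq; simp [hp, hcol p hp]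
    · simp [hp, hq]

end Matrix

theorem Fin.forall_ne_last_iff {n : ℕ} {P : Fin (n + 1) → Prop} :
    (∀ j ≠ Fin.last n, P j) ↔ ∀ l : Fin n, P l.castSucc := by
  simp [Fin.forall_fin_succ', Fin.castSucc_ne_last]

theorem qi_ne_zero : qi ≠ 0 := fun h => by
  simpa [qi, Quaternion.imI_zero] using congrArg QuaternionAlgebra.imI h

theorem commute_smul_qi_smul_qj_add_smul_qk_iff (a b c : ℝ) :
    Commute (a • qi) (b • qj + c • qk) ↔ a = 0 ∨ b = 0 ∧ c = 0 := by
  simp only [commute_iff_eq, Quaternion.ext_iff, Quaternion.re_mul, Quaternion.imI_mul,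
    Quaternion.imJ_mul, Quaternion.imK_mul, Quaternion.re_add, Quaternion.imI_add,
    Quaternion.imJ_add, Quaternion.imK_add, Quaternion.re_smul, Quaternion.imI_smul,
    Quaternion.imJ_smul, Quaternion.imK_smul]
  simp only [qi, smul_eq_mul, mul_zero, qj, qk, add_zero, mul_one, sub_self, zero_mul, zero_add,
    zero_sub, sub_zero, true_and]
  rw [mul_comm c a, mul_comm b a, neg_eq_self, self_eq_neg, mul_eq_zero, mul_eq_zero]
  tauto

theorem commutator_eq_zero_iff_general
    (n : ℕ) (a b c : ℝ) (w : Fin n → Quaternion ℝ)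
    (A B : Matrix (Fin (n + 1)) (Fin (n + 1)) (Quaternion ℝ))
    (hA : A = Matrix.of fun p q =>
      if p = Fin.last n ∧ q = Fin.last n then a • qi else 0)
    (hB : B = Matrix.of fun p q =>
      if hp : p = Fin.last n then
        (if hq : q = Fin.last n then b • qj + c • qk else -star (w (q.castPred hq)))
      else (if q = Fin.last n then w (p.castPred hp) else 0)) :
    A * B - B * A = 0 ↔ a = 0 ∨ (b = 0 ∧ c = 0 ∧ w = 0) := by
  have hA' : A = single (Fin.last n) (Fin.last n) (a • qi) := by
    rw [hA]; ext p q : 1; simp only [of_apply, single_apply, eq_comm]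
  rcases eq_or_ne a 0 with rfl | ha
  · simp [hA']
  have hcorner : B (Fin.last n) (Fin.last n) = b • qj + c • qk := by simp [hB]
  have hrow (l : Fin n) : B (Fin.last n) l.castSucc = -star (w l) := by
    simp [hB, Fin.castSucc_ne_last]
  have hcol (l : Fin n) : B l.castSucc (Fin.last n) = w l := by
    simp [hB, Fin.castSucc_ne_last]
  rw [hA', sub_eq_zero, ← commute_iff_eq, commute_single_iff (smul_ne_zero ha qi_ne_zero),
    hcorner, commute_smul_qi_smul_qj_add_smul_qk_iff, Fin.forall_ne_last_iff,
    Fin.forall_ne_last_iff]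
  simp [ha, hrow, hcol, funext_iff, and_assoc]

/-- **Bracket relation for `S^{4n+3} = Sp(n+1)U(1)/Sp(n)U(1)`.**
Let `A` be the quaternionic `(n+1)×(n+1)` matrix with entry `a·i` in the corner position
`(n,n)` and zeros elsewhere, and `B` the matrix with entry `b·j + c·k` in position `(n,n)`,
entries `w(l)` in positions `(l,n)` and `−conj(w(l))` in positions `(n,l)` for `l < n`,
and zeros elsewhere.  Then `A·B − B·A = 0` if and only if `a = 0`, or
`b = 0 ∧ c = 0 ∧ w = 0`. -/
theorem commutator_eq_zero_iff
    (n : ℕ) (hn : 1 ≤ n) (a b c : ℝ) (w : Fin n → Quaternion ℝ)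
    (A B : Matrix (Fin (n + 1)) (Fin (n + 1)) (Quaternion ℝ))
    (hA : A = Matrix.of fun p q =>
      if p = Fin.last n ∧ q = Fin.last n then a • qi else 0)
    (hB : B = Matrix.of fun p q =>
      if hp : p = Fin.last n then
        (if hq : q = Fin.last n then b • qj + c • qk else -star (w (q.castPred hq)))
      else (if q = Fin.last n then w (p.castPred hp) else 0)) :
    A * B - B * A = 0 ↔ a = 0 ∨ (b = 0 ∧ c = 0 ∧ w = 0) :=
  commutator_eq_zero_iff_general n a b c w A B hA hB
end

section
/- Let n ≥ 2 and let 𝔤 = su(n+1) = {A ∈ ℂ^{(n+1)×(n+1)} : Aᴴ = −A, tr(A) = 0} with bracket the matrix commutator and invariant inner product ⟨A,B⟩ = −Re(tr(A·B)). Let 𝔥 = {diag(C, 0) : C ∈ ℂ^{n×n}, Cᴴ = −C, tr(C) = 0} (su(n) embedded in the upper-left block), let 𝔪 = 𝔥^⊥, pr_𝔪 the orthogonal projection onto 𝔪, and 𝔪₀ = {v ∈ 𝔪 : ⁅w,v⁆ = 0 for all w ∈ 𝔥} (explicitly, 𝔪₀ = ℝ·diag(i,…,i,−n·i), the real line spanned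 by the diagonal matrix with n entries equal to i and last entry −n·i). Then the set of Randers equigeodesic vectors contained in 𝔪 is exactly 𝔪₀ \ {0}. -/
/-!
Write `𝔪 = 𝔪₀ ⊕ 𝔪₁`, where `𝔪₀` is the block-diagonal part of `𝔪` (spanned by
`D = i·diag(1, …, 1, -n)`) and `𝔪₁` consists of the off-block-diagonal matrices. For `n ≥ 2`
some diagonal `w ∈ 𝔥` has all entries different from its last one except that one itself, so
`ad w` is invertible on `𝔪₁` and `𝔪₁ = ⁅𝔥, 𝔪₁⁆`; hence every `ad 𝔥`-invariant `α` kills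
`𝔪₁ × 𝔪₀`. Since `⁅𝔪₀, 𝔪⁆ ⊆ 𝔪₁`, both terms of the criterion vanish for `X ∈ 𝔪₀`.

Conversely, take `α = ⟨·,·⟩` and compare `u = 0` with a small multiple of `D`: this gives
`⟨⁅X, Z⁆, D⟩ = 0` for all `Z ∈ 𝔪`, and for `Z = ⁅D, X⁆` invariance turns it into
`|⁅D, X⁆|² = 0`. So `X` is block diagonal; then `⁅𝔥, X⁆ ⊆ 𝔥` is orthogonal to `𝔥`, hence zero.
-/

open Matrix

attribute [local instance 100] LieRing.ofAssociativeRing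

/-- The invariant inner product `⟨A,B⟩ = −Re(tr(A·B))` on complex matrices. -/
noncomputable def ipC (n : ℕ) (A B : Matrix (Fin (n + 1)) (Fin (n + 1)) ℂ) : ℝ :=
  -((A * B).trace).re

namespace RandersSphere

open Matrix Complex
open scoped ComplexOrder

section Diagonal

variable {ι : Type*}

lemma conjTranspose_of_div {d : ι → ℂ} (hd : star d = -d) {B : Matrix ι ι ℂ} (hB : Bᴴ = -B) :
    (of fun p q => B p q / (d p - d q))ᴴ = -of fun p q => B p q / (d p - d q) := by
  ext p q
  have hBpq : star (B q p) = -B p q := congrFun₂ hB p q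
  have hdp : star (d p) = -d p := congrFun hd p
  have hdq : star (d q) = -d q := congrFun hd q
  simp only [conjTranspose_apply, of_apply, star_div₀, star_sub, hBpq, hdp, hdq]
  rw [neg_sub_neg, neg_div, Matrix.neg_apply, of_apply, ← div_neg, neg_sub]

variable [Fintype ι] [DecidableEq ι]

lemma conjTranspose_lie_of_skew {A B : Matrix ι ι ℂ} (hA : Aᴴ = -A) (hB : Bᴴ = -B) :
    ⁅A, B⁆ᴴ = -⁅A, B⁆ := by
  rw [Ring.lie_def, conjTranspose_sub, conjTranspose_mul, conjTranspose_mul, hA, hB]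
  noncomm_ring

lemma lie_diagonal_apply (d : ι → ℂ) (A : Matrix ι ι ℂ) (p q : ι) :
    ⁅diagonal d, A⁆ p q = (d p - d q) * A p q := by
  rw [Ring.lie_def, Matrix.sub_apply, diagonal_mul, mul_diagonal]
  ring

lemma apply_eq_zero_of_lie_diagonal_eq_zero {d : ι → ℂ} {A : Matrix ι ι ℂ}
    (h : ⁅diagonal d, A⁆ = 0) {p q : ι} (hpq : d p ≠ d q) : A p q = 0 := by
  have hpq' := congrFun₂ h p q
  rw [lie_diagonal_apply, Matrix.zero_apply] at hpq'
  exact (mul_eq_zero.mp hpq').resolve_left (sub_ne_zero.mpr hpq)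

lemma lie_diagonal_of_div {d : ι → ℂ} {B : Matrix ι ι ℂ} (hB : ∀ p q, d p = d q → B p q = 0) :
    ⁅diagonal d, of fun p q => B p q / (d p - d q)⁆ = B := by
  ext p q
  rw [lie_diagonal_apply, of_apply]
  by_cases h : d p = d q
  · simp [h, hB p q h]
  · exact mul_div_cancel₀ _ (sub_ne_zero.mpr h)

end Diagonal

abbrev Mat (n : ℕ) := Matrix (Fin (n + 1)) (Fin (n + 1)) ℂ

variable {n : ℕ}

lemma ipC_comm (A B : Mat n) : ipC n A B = ipC n B A := by
  rw [ipC, ipC, trace_mul_comm]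

lemma ipC_lie (A B C : Mat n) : ipC n ⁅A, B⁆ C = ipC n B ⁅C, A⁆ := by
  simp only [ipC, Ring.lie_def, sub_mul, mul_sub, trace_sub, Matrix.mul_assoc]
  rw [trace_mul_comm A (B * C), Matrix.mul_assoc]

lemma ipC_zero_right (A : Mat n) : ipC n A 0 = 0 := by
  simp [ipC]

lemma ipC_self_eq_re_trace {A : Mat n} (hA : Aᴴ = -A) : ipC n A A = ((Aᴴ * A).trace).re := by
  rw [ipC, hA, Matrix.neg_mul, trace_neg, neg_re]

lemma ipC_self_nonneg {A : Mat n} (hA : Aᴴ = -A) : 0 ≤ ipC n A A := by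
  rw [ipC_self_eq_re_trace hA]
  exact (Complex.nonneg_iff.mp (posSemidef_conjTranspose_mul_self A).trace_nonneg).1

lemma ipC_self_pos {A : Mat n} (hA : Aᴴ = -A) (h : A ≠ 0) : 0 < ipC n A A := by
  obtain ⟨-, him⟩ := Complex.nonneg_iff.mp (posSemidef_conjTranspose_mul_self A).trace_nonneg
  refine (ipC_self_nonneg hA).lt_of_ne fun h0 => h (trace_conjTranspose_mul_self_eq_zero_iff.mp ?_)
  rw [ipC_self_eq_re_trace hA] at h0
  exact Complex.ext h0.symm him.symm

lemma eq_zero_of_ipC_self_eq_zero {A : Mat n} (hA : Aᴴ = -A) (h : ipC n A A = 0) : A = 0 := by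
  by_contra hne
  exact (ipC_self_pos hA hne).ne' h

def IsUpperLeftSU (W : Mat n) : Prop :=
  Wᴴ = -W ∧ W.trace = 0 ∧ ∀ p : Fin (n + 1), W p (Fin.last n) = 0 ∧ W (Fin.last n) p = 0

def IsBlockDiagonal (A : Mat n) : Prop :=
  ∀ p, p ≠ Fin.last n → A p (Fin.last n) = 0 ∧ A (Fin.last n) p = 0

def IsOffBlockDiagonal (A : Mat n) : Prop :=
  ∀ p q, (p = Fin.last n ↔ q = Fin.last n) → A p q = 0

lemma IsUpperLeftSU.isBlockDiagonal {W : Mat n} (hW : IsUpperLeftSU W) : IsBlockDiagonal W :=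
  fun p _ => hW.2.2 p

lemma mul_apply_last_right {A B : Mat n} (hB : IsBlockDiagonal B) (p : Fin (n + 1)) :
    (A * B) p (Fin.last n) = A p (Fin.last n) * B (Fin.last n) (Fin.last n) := by
  rw [mul_apply, Finset.sum_eq_single (Fin.last n) (fun r _ hr => by rw [(hB r hr).1, mul_zero])
    (by simp)]

lemma mul_apply_last_left {A B : Mat n} (hA : IsBlockDiagonal A) (p : Fin (n + 1)) :
    (A * B) (Fin.last n) p = A (Fin.last n) (Fin.last n) * B (Fin.last n) p := by
  rw [mul_apply, Finset.sum_eq_single (Fin.last n) (fun r _ hr => by rw [(hA r hr).2, zero_mul])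
    (by simp)]

lemma lie_apply_last_last_eq_zero {A B : Mat n} (hA : IsBlockDiagonal A) :
    ⁅A, B⁆ (Fin.last n) (Fin.last n) = 0 := by
  rw [Ring.lie_def, Matrix.sub_apply, mul_apply_last_left hA, mul_apply_last_right hA]
  ring

lemma isUpperLeftSU_lie {A B : Mat n} (hA : Aᴴ = -A) (hB : Bᴴ = -B) (hAd : IsBlockDiagonal A)
    (hBd : IsBlockDiagonal B) : IsUpperLeftSU ⁅A, B⁆ := by
  refine ⟨conjTranspose_lie_of_skew hA hB, LieAlgebra.matrix_trace_commutator_zero _ _ _ _,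
    fun p => ?_⟩
  by_cases hp : p = Fin.last n
  · subst hp
    exact ⟨lie_apply_last_last_eq_zero hAd, lie_apply_last_last_eq_zero hAd⟩
  · simp only [Ring.lie_def, Matrix.sub_apply, mul_apply_last_right hAd, mul_apply_last_right hBd,
      mul_apply_last_left hAd, mul_apply_last_left hBd, (hAd p hp).1, (hAd p hp).2, (hBd p hp).1,
      (hBd p hp).2, zero_mul, mul_zero, sub_zero, and_self]

lemma ipC_eq_zero_of_isOffBlockDiagonal {A W : Mat n} (hA : IsOffBlockDiagonal A)
    (hW : IsUpperLeftSU W) : ipC n A W = 0 := by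
  have htr : (A * W).trace = 0 := by
    simp only [trace, diag, mul_apply]
    refine Finset.sum_eq_zero fun p _ => Finset.sum_eq_zero fun q _ => ?_
    by_cases hp : p = Fin.last n
    · rw [hp, (hW.2.2 q).1, mul_zero]
    by_cases hq : q = Fin.last n
    · rw [hq, (hW.2.2 p).2, mul_zero]
    · rw [hA p q (iff_of_false hp hq), zero_mul]
  simp [ipC, htr]

noncomputable def centralDiag (n : ℕ) : Mat n :=
  diagonal fun p => if p = Fin.last n then -(n : ℂ) * I else I

lemma centralDiag_conjTranspose : (centralDiag n)ᴴ = -centralDiag n := by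
  ext p q
  by_cases hpq : p = q
  · subst hpq
    by_cases hp : p = Fin.last n <;> simp [centralDiag, hp]
  · simp [centralDiag, hpq, Ne.symm hpq]

lemma centralDiag_trace : (centralDiag n).trace = 0 := by
  simp [centralDiag, Fin.sum_univ_castSucc, Fin.castSucc_ne_last]

lemma isBlockDiagonal_centralDiag : IsBlockDiagonal (centralDiag n) :=
  fun p hp => by simp [centralDiag, hp, Ne.symm hp]

lemma ipC_centralDiag {W : Mat n} (hW : IsUpperLeftSU W) : ipC n (centralDiag n) W = 0 := by
  have hsum : (centralDiag n * W).trace = I * W.trace := by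
    simp only [centralDiag, trace, diag, diagonal_mul, Finset.mul_sum]
    refine Finset.sum_congr rfl fun p _ => ?_
    by_cases hp : p = Fin.last n
    · rw [hp, (hW.2.2 _).1, mul_zero, mul_zero]
    · rw [if_neg hp]
  simp [ipC, hsum, hW.2.1]

lemma exists_isUpperLeftSU_diagonal_ne_last (hn : 2 ≤ n) :
    ∃ t : Fin (n + 1) → ℂ, IsUpperLeftSU (diagonal t) ∧ star t = -t ∧
      ∀ p, p ≠ Fin.last n → t p ≠ t (Fin.last n) := by
  have h0 : (0 : Fin (n + 1)) ≠ Fin.last n := by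
    rw [ne_eq, Fin.ext_iff, Fin.val_zero, Fin.val_last]; omega
  set s : Fin (n + 1) → ℝ := (n : ℝ) • Pi.single 0 1 - 1 + Pi.single (Fin.last n) 1
  have hs_last : s (Fin.last n) = 0 := by simp [s, Pi.single_eq_of_ne' h0]
  have hs_sum : ∑ p, s p = 0 := by
    simp [s, Finset.sum_add_distrib, Finset.sum_sub_distrib, ← Finset.mul_sum]
  have hs_ne : ∀ p, p ≠ Fin.last n → s p ≠ 0 := by
    intro p hp
    by_cases hp0 : p = 0
    · subst hp0
      have : (2 : ℝ) ≤ n := by exact_mod_cast hn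
      simp [s, h0]
      linarith
    · simp [s, hp, hp0]
  have hstar : star (fun p => I * s p) = -fun p => I * s p := by
    ext p
    simp
  refine ⟨fun p => I * s p, ⟨?_, ?_, fun p => ?_⟩, hstar, fun p hp => ?_⟩
  · rw [diagonal_conjTranspose, hstar]
    exact (diagonal_neg _).symm
  · rw [trace_diagonal, ← Finset.mul_sum, ← Complex.ofReal_sum, hs_sum, ofReal_zero, mul_zero]
  · constructor <;> simp only [diagonal_apply, ite_eq_right_iff] <;> rintro rfl <;> simp [hs_last]
  · simpa [hs_last] using hs_ne p hp

noncomputable def ipCForm (n : ℕ) : Mat n →ₗ[ℝ] Mat n →ₗ[ℝ] ℝ :=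
  LinearMap.mk₂ ℝ (ipC n)
    (fun A A' B => by simp only [ipC, Matrix.add_mul, trace_add, add_re]; ring)
    (fun c A B => by simp [ipC])
    (fun A B B' => by simp only [ipC, Matrix.mul_add, trace_add, add_re]; ring)
    (fun c A B => by simp [ipC])

lemma ipCForm_apply (A B : Mat n) : ipCForm n A B = ipC n A B := rfl

lemma exists_pos_ipCForm_smul_lt_one {A : Mat n} (hA : Aᴴ = -A) :
    ∃ c : ℝ, 0 < c ∧ ipCForm n (c • A) (c • A) < 1 := by
  have hq := ipC_self_nonneg hA
  refine ⟨1 / (ipC n A A + 1), by positivity, ?_⟩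
  simp only [map_smul, LinearMap.smul_apply, smul_eq_mul, ipCForm_apply]
  rw [← sub_pos]
  field_simp
  nlinarith

variable {𝔥 𝔪 𝔪₀ : Submodule ℝ (Mat n)}

lemma isInvariantInnerOn_ipCForm
    (h𝔪 : ∀ A, A ∈ 𝔪 ↔ (Aᴴ = -A ∧ A.trace = 0 ∧ ∀ W ∈ 𝔥, ipC n A W = 0)) :
    IsInvariantInnerOn 𝔥 𝔪 (ipCForm n) := by
  refine ⟨fun u _ v _ => ipC_comm u v, fun u hu hne => ipC_self_pos ((h𝔪 u).1 hu).1 hne,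
    fun w _ u _ v _ => ?_⟩
  change ipC n ⁅w, u⁆ v + ipC n u ⁅w, v⁆ = 0
  rw [ipC_lie, ← lie_skew v w]
  simp only [ipC, Matrix.mul_neg, trace_neg, neg_re]
  ring

lemma eq_zero_of_mem_of_mem
    (h𝔪 : ∀ A, A ∈ 𝔪 ↔ (Aᴴ = -A ∧ A.trace = 0 ∧ ∀ W ∈ 𝔥, ipC n A W = 0))
    {A : Mat n} (hA𝔥 : A ∈ 𝔥) (hA𝔪 : A ∈ 𝔪) : A = 0 :=
  eq_zero_of_ipC_self_eq_zero ((h𝔪 A).1 hA𝔪).1 (((h𝔪 A).1 hA𝔪).2.2 A hA𝔥)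

lemma pr_eq_self_of_mem
    (h𝔪 : ∀ A, A ∈ 𝔪 ↔ (Aᴴ = -A ∧ A.trace = 0 ∧ ∀ W ∈ 𝔥, ipC n A W = 0))
    {pr : Mat n →ₗ[ℝ] Mat n} (hpr : ∀ A : Mat n, Aᴴ = -A → A.trace = 0 → pr A ∈ 𝔪 ∧ A - pr A ∈ 𝔥)
    {A : Mat n} (hA : A ∈ 𝔪) : pr A = A := by
  obtain ⟨hskew, htr, -⟩ := (h𝔪 A).1 hA
  obtain ⟨hpr𝔪, hpr𝔥⟩ := hpr A hskew htr
  exact (sub_eq_zero.mp (eq_zero_of_mem_of_mem h𝔪 hpr𝔥 (𝔪.sub_mem hA hpr𝔪))).symm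

lemma lie_mem_of_mem_𝔪₀
    (h𝔪 : ∀ A, A ∈ 𝔪 ↔ (Aᴴ = -A ∧ A.trace = 0 ∧ ∀ W ∈ 𝔥, ipC n A W = 0))
    (h𝔪₀ : ∀ v, v ∈ 𝔪₀ ↔ (v ∈ 𝔪 ∧ ∀ w ∈ 𝔥, ⁅w, v⁆ = 0))
    {u Z : Mat n} (hu : u ∈ 𝔪₀) (hZ : Z ∈ 𝔪) : ⁅u, Z⁆ ∈ 𝔪 := by
  obtain ⟨hu𝔪, hucomm⟩ := (h𝔪₀ u).1 hu
  refine (h𝔪 _).2 ⟨conjTranspose_lie_of_skew ((h𝔪 u).1 hu𝔪).1 ((h𝔪 Z).1 hZ).1,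
    LieAlgebra.matrix_trace_commutator_zero _ _ _ _, fun W hW => ?_⟩
  rw [ipC_lie, hucomm W hW, ipC_zero_right]

lemma mem_𝔪₀_of_isBlockDiagonal (h𝔥 : ∀ W, W ∈ 𝔥 ↔ IsUpperLeftSU W)
    (h𝔪 : ∀ A, A ∈ 𝔪 ↔ (Aᴴ = -A ∧ A.trace = 0 ∧ ∀ W ∈ 𝔥, ipC n A W = 0))
    (h𝔪₀ : ∀ v, v ∈ 𝔪₀ ↔ (v ∈ 𝔪 ∧ ∀ w ∈ 𝔥, ⁅w, v⁆ = 0))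
    {X : Mat n} (hX : X ∈ 𝔪) (hXd : IsBlockDiagonal X) : X ∈ 𝔪₀ := by
  obtain ⟨hXskew, -, hXperp⟩ := (h𝔪 X).1 hX
  have h𝔥lie : ∀ W ∈ 𝔥, ⁅W, X⁆ ∈ 𝔥 := fun W hW =>
    (h𝔥 _).2 (isUpperLeftSU_lie ((h𝔥 W).1 hW).1 hXskew ((h𝔥 W).1 hW).isBlockDiagonal hXd)
  refine (h𝔪₀ X).2 ⟨hX, fun W hW => eq_zero_of_mem_of_mem h𝔪 (h𝔥lie W hW) ?_⟩
  obtain ⟨hskew, htr, -⟩ := (h𝔥 _).1 (h𝔥lie W hW)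
  refine (h𝔪 _).2 ⟨hskew, htr, fun W' hW' => ?_⟩
  have hW := (h𝔥 W).1 hW
  have hW' := (h𝔥 W').1 hW'
  rw [ipC_lie]
  exact hXperp _ ((h𝔥 _).2 (isUpperLeftSU_lie hW'.1 hW.1 hW'.isBlockDiagonal hW.isBlockDiagonal))

lemma isBlockDiagonal_of_mem_𝔪₀ (hn : 2 ≤ n) (h𝔥 : ∀ W, W ∈ 𝔥 ↔ IsUpperLeftSU W)
    (h𝔪₀ : ∀ v, v ∈ 𝔪₀ ↔ (v ∈ 𝔪 ∧ ∀ w ∈ 𝔥, ⁅w, v⁆ = 0))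
    {X : Mat n} (hX : X ∈ 𝔪₀) : IsBlockDiagonal X := by
  obtain ⟨t, ht, -, hsep⟩ := exists_isUpperLeftSU_diagonal_ne_last hn
  have hcomm := ((h𝔪₀ X).1 hX).2 _ ((h𝔥 _).2 ht)
  exact fun p hp => ⟨apply_eq_zero_of_lie_diagonal_eq_zero hcomm (hsep p hp),
    apply_eq_zero_of_lie_diagonal_eq_zero hcomm (hsep p hp).symm⟩

lemma centralDiag_mem (h𝔥 : ∀ W, W ∈ 𝔥 ↔ IsUpperLeftSU W)
    (h𝔪 : ∀ A, A ∈ 𝔪 ↔ (Aᴴ = -A ∧ A.trace = 0 ∧ ∀ W ∈ 𝔥, ipC n A W = 0))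
    (h𝔪₀ : ∀ v, v ∈ 𝔪₀ ↔ (v ∈ 𝔪 ∧ ∀ w ∈ 𝔥, ⁅w, v⁆ = 0)) : centralDiag n ∈ 𝔪₀ :=
  mem_𝔪₀_of_isBlockDiagonal h𝔥 h𝔪 h𝔪₀ ((h𝔪 _).2 ⟨centralDiag_conjTranspose, centralDiag_trace,
    fun W hW => ipC_centralDiag ((h𝔥 W).1 hW)⟩) isBlockDiagonal_centralDiag

lemma isOffBlockDiagonal_of_mem (h𝔥 : ∀ W, W ∈ 𝔥 ↔ IsUpperLeftSU W)
    (h𝔪 : ∀ A, A ∈ 𝔪 ↔ (Aᴴ = -A ∧ A.trace = 0 ∧ ∀ W ∈ 𝔥, ipC n A W = 0))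
    {Y : Mat n} (hY : Y ∈ 𝔪) (hcorner : Y (Fin.last n) (Fin.last n) = 0) :
    IsOffBlockDiagonal Y := by
  obtain ⟨hskew, htr, hperp⟩ := (h𝔪 Y).1 hY
  set U : Mat n := of fun p q => if p = Fin.last n ∨ q = Fin.last n then 0 else Y p q
  have hU : IsUpperLeftSU U := by
    refine ⟨?_, ?_, fun p => by simp [U]⟩
    · ext p q
      have hpq : star (Y q p) = -Y p q := congrFun₂ hskew p q
      by_cases h : p = Fin.last n ∨ q = Fin.last n
      · simp [U, h, or_comm]
      · simp [U, h, or_comm, hpq]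
    · rw [← htr]
      refine Finset.sum_congr rfl fun p _ => ?_
      by_cases hp : p = Fin.last n
      · simp [U, hp, hcorner]
      · simp [U, hp]
  have hYU : ipC n Y U = ipC n U U := by
    suffices h : ∀ p q, Y p q * U q p = U p q * U q p by simp only [ipC, trace, diag, mul_apply, h]
    intro p q
    by_cases h : p = Fin.last n ∨ q = Fin.last n
    · simp [U, h, or_comm]
    · simp [U, h]
  have hU0 : U = 0 := eq_zero_of_ipC_self_eq_zero hU.1 (by rw [← hYU, hperp U ((h𝔥 U).2 hU)])
  intro p q hpq
  by_cases hp : p = Fin.last n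
  · rw [hp, hpq.1 hp, hcorner]
  · have hq : q ≠ Fin.last n := fun hq => hp (hpq.2 hq)
    simpa [U, hp, hq] using congrFun₂ hU0 p q

lemma apply_eq_zero_of_isOffBlockDiagonal (hn : 2 ≤ n) (h𝔥 : ∀ W, W ∈ 𝔥 ↔ IsUpperLeftSU W)
    (h𝔪 : ∀ A, A ∈ 𝔪 ↔ (Aᴴ = -A ∧ A.trace = 0 ∧ ∀ W ∈ 𝔥, ipC n A W = 0))
    (h𝔪₀ : ∀ v, v ∈ 𝔪₀ ↔ (v ∈ 𝔪 ∧ ∀ w ∈ 𝔥, ⁅w, v⁆ = 0))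
    {α : Mat n →ₗ[ℝ] Mat n →ₗ[ℝ] ℝ} (hα : IsInvariantInnerOn 𝔥 𝔪 α)
    {Y u : Mat n} (hYskew : Yᴴ = -Y) (hY : IsOffBlockDiagonal Y) (hu : u ∈ 𝔪₀) : α Y u = 0 := by
  obtain ⟨t, ht, hstar, hsep⟩ := exists_isUpperLeftSU_diagonal_ne_last hn
  have hsupp : ∀ p q, t p = t q → Y p q = 0 := by
    refine fun p q htpq => hY p q ⟨fun hp => ?_, fun hq => ?_⟩
    · by_contra hq
      exact hsep q hq (hp ▸ htpq).symm
    · by_contra hp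
      exact hsep p hp (hq ▸ htpq)
  set Y' : Mat n := of fun p q => Y p q / (t p - t q)
  have hY'off : IsOffBlockDiagonal Y' := fun p q hpq => by simp [Y', hY p q hpq]
  have hY' : Y' ∈ 𝔪 := (h𝔪 _).2 ⟨conjTranspose_of_div hstar hYskew, by simp [Y', trace],
    fun W hW => ipC_eq_zero_of_isOffBlockDiagonal hY'off ((h𝔥 W).1 hW)⟩
  obtain ⟨hu𝔪, hucomm⟩ := (h𝔪₀ u).1 hu
  have hinv := hα.2.2 _ ((h𝔥 _).2 ht) Y' hY' u hu𝔪
  rwa [lie_diagonal_of_div hsupp, hucomm _ ((h𝔥 _).2 ht), map_zero, add_zero] at hinv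

lemma ipC_lie_centralDiag_eq_zero (h𝔥 : ∀ W, W ∈ 𝔥 ↔ IsUpperLeftSU W)
    (h𝔪 : ∀ A, A ∈ 𝔪 ↔ (Aᴴ = -A ∧ A.trace = 0 ∧ ∀ W ∈ 𝔥, ipC n A W = 0))
    (h𝔪₀ : ∀ v, v ∈ 𝔪₀ ↔ (v ∈ 𝔪 ∧ ∀ w ∈ 𝔥, ⁅w, v⁆ = 0))
    {pr : Mat n →ₗ[ℝ] Mat n} (hpr : ∀ A : Mat n, Aᴴ = -A → A.trace = 0 → pr A ∈ 𝔪 ∧ A - pr A ∈ 𝔥)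
    {X : Mat n} (hX : X ∈ 𝔪) (hX0 : X ≠ 0) (hXR : IsRandersEquigeodesicVector 𝔥 𝔪 𝔪₀ pr X)
    {Z : Mat n} (hZ : Z ∈ 𝔪) : ipC n ⁅X, Z⁆ (centralDiag n) = 0 := by
  have hD := centralDiag_mem h𝔥 h𝔪 h𝔪₀
  have hα : IsInvariantInnerOn 𝔥 𝔪 (ipCForm n) := isInvariantInnerOn_ipCForm h𝔪
  obtain ⟨c, hc0, hc⟩ := exists_pos_ipCForm_smul_lt_one (centralDiag_conjTranspose (n := n))
  have h₀ := hXR _ hα 0 (zero_mem _) (by simp) Z hZ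
  have h₁ := hXR _ hα _ (𝔪₀.smul_mem c hD) hc Z hZ
  rw [map_zero, mul_zero, add_zero] at h₀
  rw [h₀, zero_add, map_smul, smul_eq_mul, mul_eq_zero, mul_eq_zero] at h₁
  have hsqrt : Real.sqrt (ipC n X X) ≠ 0 :=
    (Real.sqrt_pos.2 (ipC_self_pos ((h𝔪 X).1 hX).1 hX0)).ne'
  have hprD : ipCForm n (pr ⁅X, Z⁆) (centralDiag n) = 0 :=
    (h₁.resolve_left hsqrt).resolve_left hc0.ne'
  obtain ⟨-, hdiff⟩ := hpr _ (conjTranspose_lie_of_skew ((h𝔪 X).1 hX).1 ((h𝔪 Z).1 hZ).1)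
    (LieAlgebra.matrix_trace_commutator_zero _ _ _ _)
  have hdiffD : ipCForm n (⁅X, Z⁆ - pr ⁅X, Z⁆) (centralDiag n) = 0 := by
    rw [ipCForm_apply, ipC_comm]
    exact ((h𝔪 _).1 ((h𝔪₀ _).1 hD).1).2.2 _ hdiff
  rwa [map_sub, LinearMap.sub_apply, hprD, sub_zero] at hdiffD

lemma mem_𝔪₀_of_isRandersEquigeodesicVector (h𝔥 : ∀ W, W ∈ 𝔥 ↔ IsUpperLeftSU W)
    (h𝔪 : ∀ A, A ∈ 𝔪 ↔ (Aᴴ = -A ∧ A.trace = 0 ∧ ∀ W ∈ 𝔥, ipC n A W = 0))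
    (h𝔪₀ : ∀ v, v ∈ 𝔪₀ ↔ (v ∈ 𝔪 ∧ ∀ w ∈ 𝔥, ⁅w, v⁆ = 0))
    {pr : Mat n →ₗ[ℝ] Mat n} (hpr : ∀ A : Mat n, Aᴴ = -A → A.trace = 0 → pr A ∈ 𝔪 ∧ A - pr A ∈ 𝔥)
    {X : Mat n} (hX : X ∈ 𝔪) (hX0 : X ≠ 0) (hXR : IsRandersEquigeodesicVector 𝔥 𝔪 𝔪₀ pr X) :
    X ∈ 𝔪₀ := by
  have hDX := lie_mem_of_mem_𝔪₀ h𝔪 h𝔪₀ (centralDiag_mem h𝔥 h𝔪 h𝔪₀) hX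
  have hcomm : ⁅centralDiag n, X⁆ = 0 := by
    have h := ipC_lie_centralDiag_eq_zero h𝔥 h𝔪 h𝔪₀ hpr hX hX0 hXR hDX
    rw [ipC_lie] at h
    exact eq_zero_of_ipC_self_eq_zero ((h𝔪 _).1 hDX).1 h
  have hsep : I ≠ -(n : ℂ) * I := fun h => by
    have : ((n : ℂ) + 1) * I = 0 := by linear_combination h
    exact Nat.cast_add_one_ne_zero n ((mul_eq_zero.mp this).resolve_right I_ne_zero)
  refine mem_𝔪₀_of_isBlockDiagonal h𝔥 h𝔪 h𝔪₀ hX fun p hp =>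
    ⟨apply_eq_zero_of_lie_diagonal_eq_zero hcomm ?_, apply_eq_zero_of_lie_diagonal_eq_zero hcomm ?_⟩
  · simpa [hp] using hsep
  · simpa [hp] using hsep.symm

lemma isRandersEquigeodesicVector_of_mem_𝔪₀ (hn : 2 ≤ n) (h𝔥 : ∀ W, W ∈ 𝔥 ↔ IsUpperLeftSU W)
    (h𝔪 : ∀ A, A ∈ 𝔪 ↔ (Aᴴ = -A ∧ A.trace = 0 ∧ ∀ W ∈ 𝔥, ipC n A W = 0))
    (h𝔪₀ : ∀ v, v ∈ 𝔪₀ ↔ (v ∈ 𝔪 ∧ ∀ w ∈ 𝔥, ⁅w, v⁆ = 0))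
    {pr : Mat n →ₗ[ℝ] Mat n} (hpr : ∀ A : Mat n, Aᴴ = -A → A.trace = 0 → pr A ∈ 𝔪 ∧ A - pr A ∈ 𝔥)
    {X : Mat n} (hX : X ∈ 𝔪₀) : IsRandersEquigeodesicVector 𝔥 𝔪 𝔪₀ pr X := by
  intro α hα u hu _ Z hZ
  have hY := lie_mem_of_mem_𝔪₀ h𝔪 h𝔪₀ hX hZ
  have hYoff := isOffBlockDiagonal_of_mem h𝔥 h𝔪 hY
    (lie_apply_last_last_eq_zero (isBlockDiagonal_of_mem_𝔪₀ hn h𝔥 h𝔪₀ hX))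
  have hYskew := ((h𝔪 _).1 hY).1
  rw [pr_eq_self_of_mem h𝔪 hpr hY,
    apply_eq_zero_of_isOffBlockDiagonal hn h𝔥 h𝔪 h𝔪₀ hα hYskew hYoff hX,
    apply_eq_zero_of_isOffBlockDiagonal hn h𝔥 h𝔪 h𝔪₀ hα hYskew hYoff hu, mul_zero, add_zero]

end RandersSphere

open RandersSphere in
/-- **Randers equigeodesic vectors for the sphere `S^{2n+1} = SU(n+1)/SU(n)`, `n ≥ 2`.**
Here `𝔤 = su(n+1)` with the commutator bracket and the invariant inner product
`⟨A,B⟩ = −Re(tr(A·B))`, `𝔥 = su(n)` embedded in the upper-left block, `𝔪 = 𝔥ᗮ`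
(inside `𝔤`), and `𝔪₀` the fixed-point set of `ad 𝔥` on `𝔪`.  The set of Randers
equigeodesic vectors contained in `𝔪` is exactly `𝔪₀ \ {0}`. -/
theorem randers_equigeodesic_vectors_of_su_n_plus_one_quotient_su_n
    (n : ℕ) (hn : 2 ≤ n)
    (𝔥 : Submodule ℝ (Matrix (Fin (n + 1)) (Fin (n + 1)) ℂ))
    (h𝔥 : ∀ W, W ∈ 𝔥 ↔
      (Wᴴ = -W ∧ W.trace = 0 ∧
        ∀ p : Fin (n + 1), W p (Fin.last n) = 0 ∧ W (Fin.last n) p = 0))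
    (𝔪 : Submodule ℝ (Matrix (Fin (n + 1)) (Fin (n + 1)) ℂ))
    (h𝔪 : ∀ A, A ∈ 𝔪 ↔ (Aᴴ = -A ∧ A.trace = 0 ∧ ∀ W ∈ 𝔥, ipC n A W = 0))
    (𝔪₀ : Submodule ℝ (Matrix (Fin (n + 1)) (Fin (n + 1)) ℂ))
    (h𝔪₀ : ∀ v, v ∈ 𝔪₀ ↔ (v ∈ 𝔪 ∧ ∀ w ∈ 𝔥, ⁅w, v⁆ = 0))
    (pr : Matrix (Fin (n + 1)) (Fin (n + 1)) ℂ →ₗ[ℝ] Matrix (Fin (n + 1)) (Fin (n + 1)) ℂ)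
    (hpr : ∀ A : Matrix (Fin (n + 1)) (Fin (n + 1)) ℂ,
      Aᴴ = -A → A.trace = 0 → pr A ∈ 𝔪 ∧ A - pr A ∈ 𝔥) :
    ∀ X : Matrix (Fin (n + 1)) (Fin (n + 1)) ℂ,
      (X ∈ 𝔪 ∧ X ≠ 0 ∧ IsRandersEquigeodesicVector 𝔥 𝔪 𝔪₀ pr X) ↔
        (X ∈ 𝔪₀ ∧ X ≠ 0) := by
  intro X
  constructor
  · rintro ⟨hX, hX0, hXR⟩
    exact ⟨mem_𝔪₀_of_isRandersEquigeodesicVector h𝔥 h𝔪 h𝔪₀ hpr hX hX0 hXR, hX0⟩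
  · rintro ⟨hX, hX0⟩
    exact ⟨((h𝔪₀ X).1 hX).1, hX0, isRandersEquigeodesicVector_of_mem_𝔪₀ hn h𝔥 h𝔪 h𝔪₀ hpr hX⟩
end
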